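/- arXiv:1707.00208 — 10 statements merged into one kernel-verified Lean document; each statement's English description precedes it below -/
import Mathlib

section
/- There exists a single-commodity routing instance with affine latency functions and a value θ = 3/2 such that none of the three sets — the set of 3/2-PNE path flows, the set of 3/2-UNE path flows, and the set of 3/2-EF path flows — is convex: each set contains two path flows whose midpoint (averaging path-flow values coordinatewise) does not belong to the set. -/
/-!
Braess's network, with vertices `0 = s`, `1 = a`, `2 = b`, `3 = t`: the edges `s → a` and `a → t`
have latency `1`, the edge `s → b` latency `0`, the edge `b → t` latency `x + 1`, and a
zero-latency edge `a → b` creates the zigzag path `s → a → b → t`. A unit demand split as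
`(u, v, z)` over the upper, lower and zigzag paths makes them cost `2`, `v + z + 1` and `v + z + 2`.
Routing everything along the zigzag path (costs `2, 2, 3`) and splitting it evenly between the
upper and lower paths (costs `2, 3/2, 5/2`) are both `3/2`-equilibria, but their midpoint
`(1/4, 1/4, 1/2)` uses the zigzag path at cost `11/4 > 3/2 · 7/4`, the cost of the used lower path.
Every path has an edge of its own, so its positive paths are exactly its used paths; hence failing
`3/2`-envy-freeness also rules out the other two notions.
-/

open scoped BigOperators

/-- A routing instance: a finite directed (multi)graph given by source/target maps
on edges, a finite set of commodities with sources, sinks, demands, and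
load-dependent latency functions on edges. -/
structure RoutingInstance (V E K : Type*) where
  src : E → V
  tgt : E → V
  source : K → V
  sink : K → V
  demand : K → ℝ
  latency : E → ℝ → ℝ

namespace RoutingInstance

variable {V E K : Type*} [Fintype V] [Fintype E] [Fintype K] [DecidableEq E]

/-- Standard assumptions: positive demands, latencies nonnegative and
nondecreasing on `[0, ∞)`. -/
def Standard (G : RoutingInstance V E K) : Prop :=
  (∀ k, 0 < G.demand k) ∧
  (∀ e x, (0:ℝ) ≤ x → 0 ≤ G.latency e x) ∧
  (∀ e, MonotoneOn (G.latency e) (Set.Ici (0:ℝ)))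

/-- `G.IsWalkFrom s t l` : the list of edges `l` is a directed walk from `s` to `t`. -/
def IsWalkFrom (G : RoutingInstance V E K) : V → V → List E → Prop
  | s, t, [] => s = t
  | s, t, e :: es => G.src e = s ∧ IsWalkFrom G (G.tgt e) t es

/-- The list of vertices visited by a walk starting at `s`. -/
def walkVerts (G : RoutingInstance V E K) (s : V) (l : List E) : List V :=
  s :: l.map G.tgt

/-- A simple directed path from the source of commodity `k` to its sink. -/
def IsPathOf (G : RoutingInstance V E K) (k : K) (p : List E) : Prop :=
  G.IsWalkFrom (G.source k) (G.sink k) p ∧ (G.walkVerts (G.source k) p).Nodup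

/-- A feasible path flow: nonnegative, supported on simple `s_k`-`t_k` paths,
and routing the whole demand of each commodity. -/
def Feasible (G : RoutingInstance V E K) (f : K → (List E →₀ ℝ)) : Prop :=
  (∀ k p, 0 ≤ f k p) ∧
  (∀ k p, f k p ≠ 0 → G.IsPathOf k p) ∧
  (∀ k, ((f k).sum fun _ v => v) = G.demand k)

/-- Edge flow of commodity `k` induced by a path flow. -/
def edgeFlowK (G : RoutingInstance V E K) (f : K → (List E →₀ ℝ)) (k : K) (e : E) : ℝ :=
  (f k).sum fun p v => if e ∈ p then v else 0

/-- Total edge flow induced by a path flow. -/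
def edgeFlow (G : RoutingInstance V E K) (f : K → (List E →₀ ℝ)) (e : E) : ℝ :=
  ∑ k, G.edgeFlowK f k e

/-- Latency (cost) of a path under the edge flows induced by the path flow `f`. -/
def pathCost (G : RoutingInstance V E K) (f : K → (List E →₀ ℝ)) (p : List E) : ℝ :=
  (p.map fun e => G.latency e (G.edgeFlow f e)).sum

/-- A path is used by commodity `k` if it carries positive flow in `f`. -/
def Used (G : RoutingInstance V E K) (f : K → (List E →₀ ℝ)) (k : K) (p : List E) : Prop :=
  0 < f k p

/-- A path is positive for commodity `k` if each of its edges carries positive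
commodity-`k` flow. -/
def PositivePath (G : RoutingInstance V E K) (f : K → (List E →₀ ℝ)) (k : K) (p : List E) :
    Prop :=
  G.IsPathOf k p ∧ ∀ e ∈ p, 0 < G.edgeFlowK f k e

/-- θ-Positive Nash Equilibrium (a property of the induced edge flow):
every positive path costs at most θ times any path of the same commodity. -/
def IsPNE (G : RoutingInstance V E K) (θ : ℝ) (f : K → (List E →₀ ℝ)) : Prop :=
  ∀ k p q, G.PositivePath f k p → G.IsPathOf k q →
    G.pathCost f p ≤ θ * G.pathCost f q

/-- θ-Used Nash Equilibrium: every used path costs at most θ times any path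
of the same commodity. -/
def IsUNE (G : RoutingInstance V E K) (θ : ℝ) (f : K → (List E →₀ ℝ)) : Prop :=
  ∀ k p q, G.Used f k p → G.IsPathOf k q →
    G.pathCost f p ≤ θ * G.pathCost f q

/-- θ-Envy Free: every used path costs at most θ times any used path
of the same commodity. -/
def IsEF (G : RoutingInstance V E K) (θ : ℝ) (f : K → (List E →₀ ℝ)) : Prop :=
  ∀ k p q, G.Used f k p → G.Used f k q →
    G.pathCost f p ≤ θ * G.pathCost f q

/-- Social cost of a path flow. -/
def socialCost (G : RoutingInstance V E K) (f : K → (List E →₀ ℝ)) : ℝ :=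
  ∑ e, G.edgeFlow f e * G.latency e (G.edgeFlow f e)

end RoutingInstance

namespace RoutingInstance

variable {V E K : Type*} (G : RoutingInstance V E K)

theorem IsWalkFrom.of_closed {t : V} (P : V → List E → Prop) (hnil : P t [])
    (hcons : ∀ e es, P (G.tgt e) es → P (G.src e) (e :: es)) :
    ∀ {v : V} {p : List E}, G.IsWalkFrom v t p → P v p
  | _, [], rfl => hnil
  | _, e :: _, ⟨rfl, h⟩ => hcons e _ (of_closed P hnil hcons h)

theorem standard_of_affine (hd : ∀ k, 0 < G.demand k)
    (h : ∀ e, ∃ a b : ℝ, 0 ≤ a ∧ 0 ≤ b ∧ ∀ x, G.latency e x = a * x + b) : G.Standard := by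
  refine ⟨hd, fun e x hx => ?_, fun e x _ y _ hxy => ?_⟩ <;>
    obtain ⟨a, b, ha, hb, hl⟩ := h e <;> simp only [hl]
  · positivity
  · gcongr

variable [Fintype K] [DecidableEq E]

theorem edgeFlow_of_unique [Unique K] (f : K → (List E →₀ ℝ)) (e : E) :
    G.edgeFlow f e = G.edgeFlowK f default e :=
  Fintype.sum_unique _

variable {G}

theorem isPNE_iff_isUNE {θ : ℝ} {f : K → (List E →₀ ℝ)}
    (h : ∀ k p, G.PositivePath f k p ↔ G.Used f k p) : G.IsPNE θ f ↔ G.IsUNE θ f := by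
  simp only [IsPNE, IsUNE, h]

theorem IsUNE.isEF {θ : ℝ} {f : K → (List E →₀ ℝ)} (hf : G.Feasible f) (h : G.IsUNE θ f) :
    G.IsEF θ f :=
  fun k p q hp hq => h k p q hp (hf.2.1 k q hq.ne')

end RoutingInstance

section Braess

open RoutingInstance

def braess : RoutingInstance (Fin 4) (Fin 5) Unit where
  src := ![0, 1, 0, 2, 1]
  tgt := ![1, 3, 2, 3, 2]
  source := fun _ => 0
  sink := fun _ => 3
  demand := fun _ => 1
  latency := fun e x => ![0, 0, 0, 1, 0] e * x + ![1, 1, 0, 1, 0] e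

def upperPath : List (Fin 5) := [0, 1]
def lowerPath : List (Fin 5) := [2, 3]
def zigzagPath : List (Fin 5) := [0, 4, 3]

def braessWalksToSink : Fin 4 → List (List (Fin 5)) :=
  ![[upperPath, lowerPath, zigzagPath], [[1], [4, 3]], [[3]], [[]]]

theorem isPathOf_braess_iff {p : List (Fin 5)} :
    braess.IsPathOf () p ↔ p = upperPath ∨ p = lowerPath ∨ p = zigzagPath := by
  constructor
  · intro hp
    have := IsWalkFrom.of_closed braess (fun v p => p ∈ braessWalksToSink v)
      (by decide) (by decide) hp.1
    simpa [braessWalksToSink, braess] using this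
  · rintro (rfl | rfl | rfl) <;>
      simp [IsPathOf, IsWalkFrom, walkVerts, braess, upperPath, lowerPath, zigzagPath]

noncomputable def braessFlow (u v z : ℝ) : Unit → (List (Fin 5) →₀ ℝ) := fun _ =>
  Finsupp.single upperPath u + Finsupp.single lowerPath v + Finsupp.single zigzagPath z

theorem braessFlow_apply (u v z : ℝ) (k : Unit) (p : List (Fin 5)) :
    braessFlow u v z k p = (if upperPath = p then u else 0) + (if lowerPath = p then v else 0) +
      (if zigzagPath = p then z else 0) := by
  simp only [braessFlow, Finsupp.add_apply, Finsupp.single_apply]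

theorem braessFlow_sum (u v z : ℝ) (k : Unit) (h : List (Fin 5) → ℝ → ℝ)
    (h_zero : ∀ p, h p 0 = 0) (h_add : ∀ p a b, h p (a + b) = h p a + h p b) :
    (braessFlow u v z k).sum h = h upperPath u + h lowerPath v + h zigzagPath z := by
  simp only [braessFlow, Finsupp.sum_add_index' h_zero h_add, Finsupp.sum_single_index (h_zero _)]

theorem braessFlow_midpoint (u v z u' v' z' : ℝ) :
    (fun k => (2⁻¹ : ℝ) • (braessFlow u v z k + braessFlow u' v' z' k)) =
      braessFlow ((u + u') / 2) ((v + v') / 2) ((z + z') / 2) := by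
  funext k
  ext p
  simp only [Finsupp.smul_apply, Finsupp.add_apply, braessFlow_apply, smul_eq_mul]
  split_ifs <;> ring

theorem edgeFlowK_braessFlow (u v z : ℝ) (k : Unit) :
    braess.edgeFlowK (braessFlow u v z) k = ![u + z, u, v, v + z, z] := by
  funext e
  rw [edgeFlowK, braessFlow_sum (h := fun p x => if e ∈ p then x else 0)
    _ _ _ _ (fun _ => ite_self 0) (fun _ _ _ => by rw [ite_add_ite, add_zero])]
  fin_cases e <;> simp [upperPath, lowerPath, zigzagPath]

theorem edgeFlow_braessFlow (u v z : ℝ) :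
    braess.edgeFlow (braessFlow u v z) = ![u + z, u, v, v + z, z] :=
  funext fun _ => (edgeFlow_of_unique _ _ _).trans (congrFun (edgeFlowK_braessFlow _ _ _ _) _)

theorem pathCost_braessFlow_upper (u v z : ℝ) :
    braess.pathCost (braessFlow u v z) upperPath = 2 := by
  rw [pathCost, edgeFlow_braessFlow]
  norm_num [braess, upperPath]

theorem pathCost_braessFlow_lower (u v z : ℝ) :
    braess.pathCost (braessFlow u v z) lowerPath = v + z + 1 := by
  rw [pathCost, edgeFlow_braessFlow]
  simp [braess, lowerPath]

theorem pathCost_braessFlow_zigzag (u v z : ℝ) :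
    braess.pathCost (braessFlow u v z) zigzagPath = v + z + 2 := by
  rw [pathCost, edgeFlow_braessFlow]
  simp [braess, zigzagPath, add_comm, add_left_comm, one_add_one_eq_two]

theorem feasible_braessFlow {u v z : ℝ} (hu : 0 ≤ u) (hv : 0 ≤ v) (hz : 0 ≤ z)
    (hsum : u + v + z = 1) : braess.Feasible (braessFlow u v z) := by
  refine ⟨fun _ p => ?_, fun _ p hp => ?_, fun _ => ?_⟩
  · rw [braessFlow_apply]; split_ifs <;> positivity
  · rw [braessFlow_apply] at hp
    rw [isPathOf_braess_iff]
    by_contra! h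
    simp [h.1.symm, h.2.1.symm, h.2.2.symm] at hp
  · rw [braessFlow_sum _ _ _ _ _ (fun _ => rfl) (fun _ _ _ => rfl)]
    exact hsum

theorem used_braessFlow_iff {u v z : ℝ} {p : List (Fin 5)} :
    braess.Used (braessFlow u v z) () p ↔
      p = upperPath ∧ 0 < u ∨ p = lowerPath ∧ 0 < v ∨ p = zigzagPath ∧ 0 < z := by
  rw [Used, braessFlow_apply]
  by_cases hu : upperPath = p
  · subst hu; simp [upperPath, lowerPath, zigzagPath]
  by_cases hv : lowerPath = p
  · subst hv; simp [upperPath, lowerPath, zigzagPath]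
  by_cases hz : zigzagPath = p
  · subst hz; simp [upperPath, lowerPath, zigzagPath]
  simp [hu, hv, hz, Ne.symm hu, Ne.symm hv, Ne.symm hz]

theorem positivePath_braessFlow_iff {u v z : ℝ} (hu : 0 ≤ u) (hv : 0 ≤ v) (hz : 0 ≤ z)
    {p : List (Fin 5)} :
    braess.PositivePath (braessFlow u v z) () p ↔
      p = upperPath ∧ 0 < u ∨ p = lowerPath ∧ 0 < v ∨ p = zigzagPath ∧ 0 < z := by
  rw [PositivePath, isPathOf_braess_iff, edgeFlowK_braessFlow]
  constructor
  · rintro ⟨rfl | rfl | rfl, h⟩ <;> simp_all [upperPath, lowerPath, zigzagPath]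
  · rintro (⟨rfl, h⟩ | ⟨rfl, h⟩ | ⟨rfl, h⟩) <;>
      simp [upperPath, lowerPath, zigzagPath, add_pos_of_pos_of_nonneg, add_pos_of_nonneg_of_pos, *]

theorem isPNE_braessFlow_iff {θ u v z : ℝ} (hu : 0 ≤ u) (hv : 0 ≤ v) (hz : 0 ≤ z) :
    braess.IsPNE θ (braessFlow u v z) ↔ braess.IsUNE θ (braessFlow u v z) :=
  isPNE_iff_isUNE fun ⟨⟩ _ => (positivePath_braessFlow_iff hu hv hz).trans used_braessFlow_iff.symm

theorem isUNE_braessFlow_zigzag : braess.IsUNE (3 / 2) (braessFlow 0 0 1) := by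
  rintro ⟨⟩ p q hp hq
  obtain rfl : p = zigzagPath := by simpa using used_braessFlow_iff.1 hp
  rcases isPathOf_braess_iff.1 hq with rfl | rfl | rfl <;>
    simp only [pathCost_braessFlow_upper, pathCost_braessFlow_lower, pathCost_braessFlow_zigzag] <;>
    norm_num

theorem isUNE_braessFlow_upper_lower : braess.IsUNE (3 / 2) (braessFlow (1 / 2) (1 / 2) 0) := by
  rintro ⟨⟩ p q hp hq
  obtain rfl | rfl : p = upperPath ∨ p = lowerPath := by simpa using used_braessFlow_iff.1 hp
  all_goals
    rcases isPathOf_braess_iff.1 hq with rfl | rfl | rfl <;>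
    simp only [pathCost_braessFlow_upper, pathCost_braessFlow_lower, pathCost_braessFlow_zigzag] <;>
    norm_num

theorem not_isEF_braessFlow_mid : ¬ braess.IsEF (3 / 2) (braessFlow (1 / 4) (1 / 4) (1 / 2)) := by
  intro h
  have := h () zigzagPath lowerPath (used_braessFlow_iff.2 (by norm_num))
    (used_braessFlow_iff.2 (by norm_num))
  rw [pathCost_braessFlow_zigzag, pathCost_braessFlow_lower] at this
  norm_num at this

theorem braess_affine :
    ∀ e, ∃ a b : ℝ, 0 ≤ a ∧ 0 ≤ b ∧ ∀ x, braess.latency e x = a * x + b :=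
  fun e => ⟨_, _, by fin_cases e <;> simp, by fin_cases e <;> simp, fun _ => rfl⟩

end Braess

open RoutingInstance in
/-- There exists a single-commodity routing instance with affine latency
functions such that none of the sets of 3/2-PNE, 3/2-UNE and 3/2-EF path flows is
convex: each contains two path flows whose (coordinatewise) midpoint is a feasible
path flow not belonging to the set. -/
theorem stmt_1 :
    ∃ (nV nE : ℕ) (G : RoutingInstance (Fin nV) (Fin nE) Unit),
      G.Standard ∧
      (∀ e, ∃ a b : ℝ, 0 ≤ a ∧ 0 ≤ b ∧ ∀ x, G.latency e x = a * x + b) ∧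
      (∃ f₁ f₂ : Unit → (List (Fin nE) →₀ ℝ), G.Feasible f₁ ∧ G.Feasible f₂ ∧
        G.IsPNE (3/2) f₁ ∧ G.IsPNE (3/2) f₂ ∧
        G.Feasible (fun k => (2⁻¹ : ℝ) • (f₁ k + f₂ k)) ∧
        ¬ G.IsPNE (3/2) (fun k => (2⁻¹ : ℝ) • (f₁ k + f₂ k))) ∧
      (∃ f₁ f₂ : Unit → (List (Fin nE) →₀ ℝ), G.Feasible f₁ ∧ G.Feasible f₂ ∧
        G.IsUNE (3/2) f₁ ∧ G.IsUNE (3/2) f₂ ∧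
        G.Feasible (fun k => (2⁻¹ : ℝ) • (f₁ k + f₂ k)) ∧
        ¬ G.IsUNE (3/2) (fun k => (2⁻¹ : ℝ) • (f₁ k + f₂ k))) ∧
      (∃ f₁ f₂ : Unit → (List (Fin nE) →₀ ℝ), G.Feasible f₁ ∧ G.Feasible f₂ ∧
        G.IsEF (3/2) f₁ ∧ G.IsEF (3/2) f₂ ∧
        G.Feasible (fun k => (2⁻¹ : ℝ) • (f₁ k + f₂ k)) ∧
        ¬ G.IsEF (3/2) (fun k => (2⁻¹ : ℝ) • (f₁ k + f₂ k))) := by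
  have hmid : (fun k => (2⁻¹ : ℝ) • (braessFlow 0 0 1 k + braessFlow (1 / 2) (1 / 2) 0 k)) =
      braessFlow (1 / 4) (1 / 4) (1 / 2) := by
    rw [braessFlow_midpoint]; norm_num
  have h₁ : braess.Feasible (braessFlow 0 0 1) := feasible_braessFlow le_rfl le_rfl zero_le_one
    (by norm_num)
  have h₂ : braess.Feasible (braessFlow (1 / 2) (1 / 2) 0) := feasible_braessFlow (by norm_num)
    (by norm_num) le_rfl (by norm_num)
  have hm : braess.Feasible (braessFlow (1 / 4) (1 / 4) (1 / 2)) := feasible_braessFlow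
    (by norm_num) (by norm_num) (by norm_num) (by norm_num)
  have not_une : ¬ braess.IsUNE (3 / 2) (braessFlow (1 / 4) (1 / 4) (1 / 2)) :=
    fun h => not_isEF_braessFlow_mid (h.isEF hm)
  refine ⟨4, 5, braess, braess.standard_of_affine (fun _ => one_pos) braess_affine,
    braess_affine, ?_, ?_, ?_⟩ <;>
    refine ⟨braessFlow 0 0 1, braessFlow (1 / 2) (1 / 2) 0, h₁, h₂, ?_⟩ <;> rw [hmid]
  · rw [isPNE_braessFlow_iff, isPNE_braessFlow_iff, isPNE_braessFlow_iff]
    · exact ⟨isUNE_braessFlow_zigzag, isUNE_braessFlow_upper_lower, hm, not_une⟩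
    all_goals norm_num
  · exact ⟨isUNE_braessFlow_zigzag, isUNE_braessFlow_upper_lower, hm, not_une⟩
  · exact ⟨isUNE_braessFlow_zigzag.isEF h₁, isUNE_braessFlow_upper_lower.isEF h₂, hm,
      not_isEF_braessFlow_mid⟩
end

section
/- Consider the single-commodity routing instance with two vertices s, t connected by two parallel edges, where the upper edge has latency ℓ_u(x) = x and the lower edge has constant latency ℓ_b(x) = 1, and unit demand from s to t. The path flow routing all demand on the lower edge is 1-EF, but for every θ ≥ 1 it is not a θ-UNE. Consequently, for every θ ≥ 1 the set of 1-EF flows is not contained in the set of θ-UNE flows. -/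
open scoped BigOperators

open RoutingInstance in
/-- In the two-parallel-link instance with latencies ℓ_u(x) = x (edge 0)
and ℓ_b(x) = 1 (edge 1) and unit demand, the path flow routing all demand on the
lower (constant-latency) edge is 1-EF but not a θ-UNE for any θ ≥ 1.
Consequently, the set of 1-EF flows is not contained in the θ-UNE flows. -/
theorem stmt_2 (G : RoutingInstance (Fin 2) (Fin 2) Unit)
    (hsrc : ∀ e, G.src e = 0) (htgt : ∀ e, G.tgt e = 1)
    (hsource : G.source () = 0) (hsink : G.sink () = 1)
    (hdemand : G.demand () = 1)
    (hlat0 : ∀ x : ℝ, G.latency 0 x = x)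
    (hlat1 : ∀ x : ℝ, G.latency 1 x = 1)
    (f : Unit → (List (Fin 2) →₀ ℝ))
    (hf : f = fun _ => Finsupp.single [(1 : Fin 2)] 1) :
    G.Feasible f ∧ G.IsEF 1 f ∧ ∀ θ : ℝ, 1 ≤ θ → ¬ G.IsUNE θ f := by
  subst hf
  have hpath1 : G.IsPathOf () [(1 : Fin 2)] := by
    refine ⟨⟨by rw [hsrc, hsource], by simp [RoutingInstance.IsWalkFrom, htgt, hsink]⟩, ?_⟩
    simp [RoutingInstance.walkVerts, htgt, hsource]
  have hpath0 : G.IsPathOf () [(0 : Fin 2)] := by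
    refine ⟨⟨by rw [hsrc, hsource], by simp [RoutingInstance.IsWalkFrom, htgt, hsink]⟩, ?_⟩
    simp [RoutingInstance.walkVerts, htgt, hsource]
  have hflow : ∀ e : Fin 2, G.edgeFlow (fun _ => Finsupp.single [(1 : Fin 2)] 1) e
      = if e ∈ [(1 : Fin 2)] then (1:ℝ) else 0 := by
    intro e
    simp [RoutingInstance.edgeFlow, RoutingInstance.edgeFlowK,
      Finsupp.sum_single_index]
  have hcost1 : G.pathCost (fun _ => Finsupp.single [(1 : Fin 2)] 1) [(1 : Fin 2)] = 1 := by
    simp [RoutingInstance.pathCost, hflow, hlat1]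
  have hcost0 : G.pathCost (fun _ => Finsupp.single [(1 : Fin 2)] 1) [(0 : Fin 2)] = 0 := by
    simp [RoutingInstance.pathCost, hflow, hlat0]
  refine ⟨⟨?_, ?_, ?_⟩, ?_, ?_⟩
  · intro k p
    rw [Finsupp.single_apply]; split <;> norm_num
  · intro k p hp
    rw [Finsupp.single_apply_ne_zero] at hp
    rw [hp.1]; exact hpath1
  · intro k
    simp [Finsupp.sum_single_index, hdemand]
  · intro k p q hp hq
    have hp' : p = [(1 : Fin 2)] := by
      by_contra h
      simp [RoutingInstance.Used, Finsupp.single_apply, Ne.symm h] at hp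
    have hq' : q = [(1 : Fin 2)] := by
      by_contra h
      simp [RoutingInstance.Used, Finsupp.single_apply, Ne.symm h] at hq
    rw [hp', hq', hcost1]; norm_num
  · intro θ hθ hUNE
    have := hUNE () [(1 : Fin 2)] [(0 : Fin 2)]
      (by simp [RoutingInstance.Used]) hpath0
    rw [hcost1, hcost0] at this
    linarith
end

section
/- Let θ > 1 and let f be a θ-UNE path flow in a multi-commodity routing instance whose graph has n vertices. Then the edge flow induced by f is an ((n−1)θ)-PNE; that is, for every commodity k, every positive path p ∈ P^k satisfies ℓ_p(f) ≤ (n−1)θ·ℓ_q(f) for every path q ∈ P^k. -/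
open scoped BigOperators

open RoutingInstance in
/-- For θ > 1, every θ-UNE path flow in a multi-commodity instance on a
graph with n vertices induces an ((n−1)θ)-PNE edge flow. -/
theorem stmt_3 {V E K : Type*} [Fintype V] [Fintype E] [Fintype K] [DecidableEq E]
    (G : RoutingInstance V E K) (hG : G.Standard)
    (θ : ℝ) (hθ : 1 < θ) (f : K → (List E →₀ ℝ)) (hf : G.Feasible f)
    (hune : G.IsUNE θ f) :
    G.IsPNE (((Fintype.card V - 1 : ℕ) : ℝ) * θ) f := by

  intro k p q hp hq
  obtain ⟨hdem, hlat0, hmono⟩ := hG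
  -- edge flows are nonnegative
  have hKnn : ∀ k' e, 0 ≤ G.edgeFlowK f k' e := by
    intro k' e
    unfold edgeFlowK Finsupp.sum
    refine Finset.sum_nonneg fun r _ => ?_
    simp only
    split
    · exact hf.1 k' r
    · exact le_rfl
  have hEnn : ∀ e, 0 ≤ G.edgeFlow f e := by
    intro e
    exact Finset.sum_nonneg fun k' _ => hKnn k' e
  have hlatE : ∀ e, 0 ≤ G.latency e (G.edgeFlow f e) := fun e => hlat0 e _ (hEnn e)
  have hCq : 0 ≤ G.pathCost f q := List.sum_nonneg (by
    intro x hx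
    obtain ⟨e, _, rfl⟩ := List.mem_map.1 hx
    exact hlatE e)
  set C := θ * G.pathCost f q with hC
  have hCnn : 0 ≤ C := mul_nonneg (le_of_lt (lt_trans one_pos hθ)) hCq
  -- each edge of p has latency ≤ C
  have hedge : ∀ e ∈ p, G.latency e (G.edgeFlow f e) ≤ C := by
    intro e he
    have hpos := hp.2 e he
    -- find a used path r containing e
    have : ∃ r, 0 < f k r ∧ e ∈ r := by
      by_contra hcon
      push_neg at hcon
      have : G.edgeFlowK f k e = 0 := by
        refine Finset.sum_eq_zero ?_
        intro r hr
        by_cases hmem : e ∈ r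
        · simp only [hmem, if_true]
          have h1 := hf.1 k r
          have h2 := hcon r
          by_contra hne
          exact absurd hmem (h2 (lt_of_le_of_ne h1 (Ne.symm hne)))
        · simp [hmem]
      exact absurd this (ne_of_gt hpos)
    obtain ⟨r, hru, her⟩ := this
    have hrpath : G.IsPathOf k r := hf.2.1 k r (ne_of_gt hru)
    have hle : G.latency e (G.edgeFlow f e) ≤ G.pathCost f r := by
      refine List.single_le_sum ?_ _ (List.mem_map.2 ⟨e, her, rfl⟩)
      intro x hx
      obtain ⟨e', _, rfl⟩ := List.mem_map.1 hx
      exact hlatE e'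
    exact hle.trans (hune k r q hru hq)
  -- sum the bound
  have hsum : G.pathCost f p ≤ p.length • C := by
    refine List.sum_le_card_nsmul _ C ?_ |>.trans_eq (by rw [List.length_map])
    intro x hx
    obtain ⟨e, he, rfl⟩ := List.mem_map.1 hx
    exact hedge e he
  -- length bound
  have hlen : p.length ≤ Fintype.card V - 1 := by
    have hnd := hp.1.2
    have := hnd.length_le_card
    simp only [walkVerts, List.length_cons, List.length_map] at this
    omega
  calc G.pathCost f p ≤ p.length • C := hsum
    _ ≤ (Fintype.card V - 1) • C := nsmul_le_nsmul_left hCnn hlen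
    _ = ((Fintype.card V - 1 : ℕ) : ℝ) * θ * G.pathCost f q := by
        rw [nsmul_eq_mul, hC, mul_assoc]
end

section
/- For every θ ≥ 3/2 and every sufficiently large n, there exists a single-commodity routing instance whose graph has n vertices and a path flow f that is a θ-UNE but whose induced edge flow is not an ((n−3)θ/3)-PNE. -/
open scoped BigOperators

/-!
On `m + 5` vertices take a source `s`, a sink `t` and a chain `z₀ → ⋯ → z_{m+2}` whose edges
have constant latency `θ - 1`, plus shortcut edges `s → zⱼ` and `zⱼ₊₁ → t` of latency `1/2`.
Route one unit along each of the `m + 2` paths `s → zⱼ → zⱼ₊₁ → t`: each costs `θ`, while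
every `s`-`t` path leaves `s` and enters `t` along distinct shortcuts and so costs at least `1`;
hence the flow is a `θ`-UNE. Every edge carries flow, so the whole chain
`s → z₀ → ⋯ → z_{m+2} → t` is a positive path; it costs `1 + (m + 2)(θ - 1)`, which for
`θ ≥ 3/2` exceeds `(m + 2)θ/3` times the cost `1` of `s → z₁ → t`.
-/

namespace RoutingInstance

variable {V E K : Type*} (G : RoutingInstance V E K)

theorem isWalkFrom_append {u v w : V} {l₁ l₂ : List E} (h₁ : G.IsWalkFrom u v l₁)
    (h₂ : G.IsWalkFrom v w l₂) : G.IsWalkFrom u w (l₁ ++ l₂) := by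
  induction l₁ generalizing u with
  | nil => cases h₁; exact h₂
  | cons e es ih => exact ⟨h₁.1, ih h₁.2⟩

theorem isWalkFrom_ofFn {k : ℕ} (v : Fin (k + 1) → V) (e : Fin k → E)
    (hsrc : ∀ i, G.src (e i) = v i.castSucc) (htgt : ∀ i, G.tgt (e i) = v i.succ) :
    G.IsWalkFrom (v 0) (v (Fin.last k)) (List.ofFn e) := by
  induction k with
  | zero => rfl
  | succ k ih =>
    rw [List.ofFn_succ]
    refine ⟨hsrc 0, ?_⟩
    rw [htgt 0, ← Fin.succ_last]
    exact ih (fun i => v i.succ) (fun i => e i.succ) (fun i => hsrc i.succ)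
      (fun i => htgt i.succ)

theorem add_le_sum_map_of_isWalkFrom {s t : V} {l : List E} {w : E → ℝ} {a b : ℝ}
    (hw : ∀ e, 0 ≤ w e) (hsrc : ∀ e, G.src e = s → a ≤ w e)
    (htgt : ∀ e, G.tgt e = t → b ≤ w e)
    (hst : ∀ e, G.src e = s → G.tgt e ≠ t) (hne : s ≠ t) (hl : G.IsWalkFrom s t l) :
    a + b ≤ (l.map w).sum := by
  have tail_le : ∀ {u} {l : List E}, G.IsWalkFrom u t l → u ≠ t → b ≤ (l.map w).sum := by
    intro u l hl hu
    induction l generalizing u with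
    | nil => exact absurd hl hu
    | cons e es ih =>
      rw [List.map_cons, List.sum_cons]
      by_cases he : G.tgt e = t
      · linarith [htgt e he, List.sum_nonneg (l := es.map w) (by simpa using fun e _ => hw e)]
      · linarith [hw e, ih hl.2 he]
  match l, hl with
  | [], hl => exact absurd hl hne
  | e :: es, ⟨he, hes⟩ =>
    rw [List.map_cons, List.sum_cons]
    linarith [hsrc e he, tail_le hes (hst e he)]

theorem edgeFlowK_pos_of_mem [DecidableEq E] {f : K → (List E →₀ ℝ)} {k : K} {p : List E}
    {e : E} (hf : ∀ q, 0 ≤ f k q) (hp : 0 < f k p) (he : e ∈ p) : 0 < G.edgeFlowK f k e := by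
  have hmem : p ∈ (f k).support := Finsupp.mem_support_iff.2 hp.ne'
  calc 0 < f k p := hp
    _ = if e ∈ p then f k p else 0 := (if_pos he).symm
    _ ≤ G.edgeFlowK f k e :=
      Finset.single_le_sum (f := fun q => if e ∈ q then f k q else 0)
        (fun q _ => by split_ifs <;> simp [hf q]) hmem

end RoutingInstance

section UnitFlow

variable {ι α : Type*} [Fintype ι]

/-- Repetitions in the family add up: a path listed twice carries two units. -/
noncomputable def unitFlow (P : ι → α) : α →₀ ℝ := ∑ i, Finsupp.single (P i) 1

theorem unitFlow_apply [DecidableEq α] (P : ι → α) (p : α) :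
    unitFlow P p = ∑ i, if P i = p then 1 else 0 := by
  simp [unitFlow, Finset.sum_apply', Finsupp.single_apply]

theorem unitFlow_nonneg (P : ι → α) (p : α) : 0 ≤ unitFlow P p := by
  classical
  rw [unitFlow_apply]
  exact Finset.sum_nonneg fun i _ => by split_ifs <;> norm_num

theorem unitFlow_pos (P : ι → α) (i : ι) : 0 < unitFlow P (P i) := by
  classical
  rw [unitFlow_apply]
  calc (0 : ℝ) < if P i = P i then 1 else 0 := by simp
    _ ≤ ∑ j, if P j = P i then 1 else 0 :=
      Finset.single_le_sum (f := fun j => if P j = P i then (1 : ℝ) else 0)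
        (fun j _ => by split_ifs <;> norm_num) (Finset.mem_univ i)

theorem exists_eq_of_unitFlow_ne_zero {P : ι → α} {p : α} (h : unitFlow P p ≠ 0) :
    ∃ i, P i = p := by
  classical
  by_contra! hp
  simp [unitFlow_apply, hp] at h

theorem sum_unitFlow (P : ι → α) : ((unitFlow P).sum fun _ v => v) = Fintype.card ι := by
  rw [unitFlow, ← Finsupp.sum_finsetSum_index (fun _ => rfl) (fun _ _ _ => rfl)]
  simp [Finsupp.sum_single_index]

end UnitFlow

namespace ChainWithShortcuts

/-- The chain vertex `zᵢ` is `i + 1`; the source is `0` and the sink `Fin.last (m + 4)`. -/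
def node {m : ℕ} (i : Fin (m + 3)) : Fin (m + 5) := i.castSucc.succ

theorem node_ne_zero {m : ℕ} (i : Fin (m + 3)) : node i ≠ 0 := Fin.succ_ne_zero _

theorem node_ne_last {m : ℕ} (i : Fin (m + 3)) : node i ≠ Fin.last (m + 4) := by
  simp [node, Fin.ext_iff]; omega

theorem node_injective {m : ℕ} : Function.Injective (node (m := m)) := fun i j h => by
  simpa [node] using h

inductive Arc (m : ℕ) where
  | chain (j : Fin (m + 2))
  | enter (j : Fin (m + 2))
  | exit (j : Fin (m + 2))

namespace Arc

variable {m : ℕ}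

def equivSum (m : ℕ) : Arc m ≃ Fin (m + 2) ⊕ Fin (m + 2) ⊕ Fin (m + 2) where
  toFun
    | chain j => .inl j
    | enter j => .inr (.inl j)
    | exit j => .inr (.inr j)
  invFun
    | .inl j => chain j
    | .inr (.inl j) => enter j
    | .inr (.inr j) => exit j
  left_inv a := by cases a <;> rfl
  right_inv a := by rcases a with j | j | j <;> rfl

instance : Fintype (Arc m) := Fintype.ofEquiv _ (equivSum m).symm

def src : Arc m → Fin (m + 5)
  | chain j => node j.castSucc
  | enter _ => 0
  | exit j => node j.succ

def tgt : Arc m → Fin (m + 5)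
  | chain j => node j.succ
  | enter j => node j.castSucc
  | exit _ => Fin.last (m + 4)

noncomputable def latency (θ : ℝ) : Arc m → ℝ
  | chain _ => θ - 1
  | enter _ | exit _ => 1 / 2

theorem latency_nonneg {θ : ℝ} (hθ : 1 ≤ θ) (a : Arc m) : 0 ≤ a.latency θ := by
  cases a <;> simp only [latency] <;> linarith

theorem latency_of_src_eq_zero (θ : ℝ) {a : Arc m} (h : a.src = 0) : a.latency θ = 1 / 2 := by
  cases a <;> simp_all [src, latency, node_ne_zero]

theorem latency_of_tgt_eq_last (θ : ℝ) {a : Arc m} (h : a.tgt = Fin.last (m + 4)) :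
    a.latency θ = 1 / 2 := by
  cases a <;> simp_all [tgt, latency, node_ne_last]

theorem tgt_ne_last_of_src_eq_zero {a : Arc m} (h : a.src = 0) : a.tgt ≠ Fin.last (m + 4) := by
  cases a <;> simp_all [src, tgt, node_ne_zero, node_ne_last]

end Arc

open RoutingInstance

abbrev Edge (m : ℕ) : Type := Fin (Fintype.card (Arc m))

noncomputable def arcIndex (m : ℕ) : Arc m ≃ Edge m := Fintype.equivFin _

noncomputable def network (θ : ℝ) (m : ℕ) :
    RoutingInstance (Fin (m + 5)) (Edge m) Unit where
  src e := ((arcIndex m).symm e).src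
  tgt e := ((arcIndex m).symm e).tgt
  source _ := 0
  sink _ := Fin.last (m + 4)
  demand _ := m + 2
  latency e _ := ((arcIndex m).symm e).latency θ

variable {θ : ℝ} {m : ℕ}

@[simp] theorem network_src (a : Arc m) : (network θ m).src (arcIndex m a) = a.src := by
  simp [network]

@[simp] theorem network_tgt (a : Arc m) : (network θ m).tgt (arcIndex m a) = a.tgt := by
  simp [network]

theorem pathCost_network (f : Unit → (List (Edge m) →₀ ℝ)) (l : List (Arc m)) :
    (network θ m).pathCost f (l.map (arcIndex m)) = (l.map (Arc.latency θ)).sum := by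
  simp [pathCost, network, Function.comp_def]

def usedPath (j : Fin (m + 2)) : List (Arc m) := [.enter j, .chain j, .exit j]

def chainPath (m : ℕ) : List (Arc m) := .enter 0 :: List.ofFn Arc.chain ++ [.exit (Fin.last _)]

def shortPath (m : ℕ) : List (Arc m) := [.enter 1, .exit 0]

noncomputable def flow (m : ℕ) : Unit → (List (Edge m) →₀ ℝ) :=
  fun _ => unitFlow fun j => (usedPath j).map (arcIndex m)

theorem isPathOf_usedPath (j : Fin (m + 2)) :
    (network θ m).IsPathOf () ((usedPath j).map (arcIndex m)) := by
  refine ⟨?_, ?_⟩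
  · simp [usedPath, IsWalkFrom, network, Arc.src, Arc.tgt]
  · simp [usedPath, walkVerts, network, Arc.tgt, node_ne_last, (node_ne_zero _).symm,
      node_injective.eq_iff, Fin.castSucc_lt_succ.ne]

theorem isPathOf_shortPath : (network θ m).IsPathOf () ((shortPath m).map (arcIndex m)) := by
  refine ⟨?_, ?_⟩
  · simp [shortPath, IsWalkFrom, network, Arc.src, Arc.tgt]
  · simp [shortPath, walkVerts, network, Arc.tgt, (node_ne_zero _).symm, node_ne_last]

theorem isPathOf_chainPath : (network θ m).IsPathOf () ((chainPath m).map (arcIndex m)) := by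
  refine ⟨?_, ?_⟩
  · simp only [chainPath, List.map_cons, List.map_append, List.map_ofFn]
    refine ⟨by simp [network, Arc.src], isWalkFrom_append _ (v := node (Fin.last _)) ?_ ?_⟩
    · simpa [Arc.tgt] using isWalkFrom_ofFn (network θ m) node (arcIndex m ∘ Arc.chain)
        (by simp [Arc.src]) (by simp [Arc.tgt])
    · simp [IsWalkFrom, network, Arc.src, Arc.tgt]
  · have hverts : (network θ m).walkVerts 0 ((chainPath m).map (arcIndex m)) =
        0 :: (List.ofFn node ++ [Fin.last _]) := by
      rw [List.ofFn_succ (f := node)]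
      simp only [chainPath, walkVerts, List.map_cons, List.map_append, List.map_ofFn,
        List.map_nil, network_tgt, Function.comp_def, Arc.tgt, List.cons_append]
      rfl
    show (walkVerts _ 0 _).Nodup
    rw [hverts, List.nodup_cons, List.nodup_append]
    refine ⟨?_, List.nodup_ofFn.2 node_injective, List.nodup_singleton _, ?_⟩
    · simp only [List.mem_append, List.mem_ofFn, List.mem_singleton, not_or]
      exact ⟨fun ⟨i, hi⟩ => node_ne_zero i hi, (Fin.last_pos).ne⟩
    · simp only [List.mem_ofFn, List.mem_singleton]
      rintro _ ⟨i, rfl⟩ _ rfl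
      exact node_ne_last i

theorem one_le_pathCost (hθ : 1 ≤ θ) (f : Unit → (List (Edge m) →₀ ℝ))
    {q : List (Edge m)} (hq : (network θ m).IsPathOf () q) :
    1 ≤ (network θ m).pathCost f q := by
  have := add_le_sum_map_of_isWalkFrom (network θ m) (l := q)
    (w := fun e => ((arcIndex m).symm e).latency θ) (a := 1 / 2) (b := 1 / 2)
    (fun e => Arc.latency_nonneg hθ _) (fun e he => (Arc.latency_of_src_eq_zero θ he).ge)
    (fun e he => (Arc.latency_of_tgt_eq_last θ he).ge)
    (fun e he => Arc.tgt_ne_last_of_src_eq_zero he) Fin.last_pos.ne hq.1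
  norm_num at this
  exact this

theorem pathCost_usedPath (f : Unit → (List (Edge m) →₀ ℝ)) (j : Fin (m + 2)) :
    (network θ m).pathCost f ((usedPath j).map (arcIndex m)) = θ := by
  rw [pathCost_network]
  simp [usedPath, Arc.latency]
  ring

theorem pathCost_shortPath (f : Unit → (List (Edge m) →₀ ℝ)) :
    (network θ m).pathCost f ((shortPath m).map (arcIndex m)) = 1 := by
  rw [pathCost_network]
  norm_num [shortPath, Arc.latency]

theorem pathCost_chainPath (f : Unit → (List (Edge m) →₀ ℝ)) :
    (network θ m).pathCost f ((chainPath m).map (arcIndex m)) = 1 + (m + 2) * (θ - 1) := by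
  rw [pathCost_network]
  simp [chainPath, Arc.latency, List.sum_ofFn]
  ring

theorem Arc.exists_mem_usedPath (a : Arc m) : ∃ j, a ∈ usedPath j := by
  cases a with
  | chain j | enter j | exit j => exact ⟨j, by simp [usedPath]⟩

theorem edgeFlowK_flow_pos (e : Edge m) :
    0 < (network θ m).edgeFlowK (flow m) () e := by
  obtain ⟨j, hj⟩ := ((arcIndex m).symm e).exists_mem_usedPath
  exact edgeFlowK_pos_of_mem _ (unitFlow_nonneg _) (unitFlow_pos _ j)
    (List.mem_map.2 ⟨_, hj, Equiv.apply_symm_apply _ e⟩)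

theorem standard_network (hθ : 1 ≤ θ) : (network θ m).Standard :=
  ⟨fun _ => by simp only [network]; positivity, fun e _ _ => Arc.latency_nonneg hθ _,
    fun _ => monotoneOn_const⟩

theorem feasible_flow : (network θ m).Feasible (flow m) := by
  refine ⟨fun _ => unitFlow_nonneg _, fun _ p hp => ?_, fun _ => ?_⟩
  · obtain ⟨j, rfl⟩ := exists_eq_of_unitFlow_ne_zero hp
    exact isPathOf_usedPath j
  · simp [flow, sum_unitFlow, network]

theorem isUNE_flow (hθ : 1 ≤ θ) : (network θ m).IsUNE θ (flow m) := by
  intro _ p q hp hq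
  obtain ⟨j, rfl⟩ := exists_eq_of_unitFlow_ne_zero hp.ne'
  rw [pathCost_usedPath]
  exact le_mul_of_one_le_right (by linarith) (one_le_pathCost hθ _ hq)

theorem not_isPNE_flow (hθ : 3 / 2 ≤ θ) :
    ¬ (network θ m).IsPNE ((m + 2) * θ / 3) (flow m) := by
  intro hPNE
  have h := hPNE () _ _ ⟨isPathOf_chainPath, fun e _ => edgeFlowK_flow_pos e⟩ isPathOf_shortPath
  rw [pathCost_chainPath, pathCost_shortPath] at h
  nlinarith [mul_nonneg (show (0 : ℝ) ≤ m + 2 by positivity)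
    (show (0 : ℝ) ≤ 2 * θ - 3 by linarith)]

end ChainWithShortcuts

open RoutingInstance in
/-- For every θ ≥ 3/2 and every sufficiently large n, there is a
single-commodity instance on n vertices and a path flow f that is a θ-UNE but whose
induced edge flow is not an ((n−3)θ/3)-PNE. -/
theorem stmt_4 (θ : ℝ) (hθ : 3/2 ≤ θ) :
    ∃ N : ℕ, ∀ n : ℕ, N ≤ n →
      ∃ (nE : ℕ) (G : RoutingInstance (Fin n) (Fin nE) Unit)
        (f : Unit → (List (Fin nE) →₀ ℝ)),
        G.Standard ∧ G.Feasible f ∧ G.IsUNE θ f ∧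
        ¬ G.IsPNE (((n : ℝ) - 3) * θ / 3) f := by
  open ChainWithShortcuts in
  refine ⟨5, fun n hn => ?_⟩
  obtain ⟨m, rfl⟩ : ∃ m, n = m + 5 := ⟨n - 5, by omega⟩
  refine ⟨_, network θ m, flow m, standard_network (by linarith), feasible_flow,
    isUNE_flow (by linarith), ?_⟩
  convert not_isPNE_flow hθ using 3
  push_cast
  ring
end

section
/- For any path flow f in a multi-commodity routing instance, f is a 1-UNE if and only if the edge flow induced by f is a 1-PNE; that is, every used path of every commodity has minimal latency among all paths of that commodity if and only if every positive path of every commodity has minimal latency among all paths of that commodity. -/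
open scoped BigOperators

/-!
Fix a commodity and let `c` be the edge latencies induced by `f`; they are nonnegative. For a
1-UNE, every used path is a shortest `s_k`–`t_k` walk, since any walk can be shortened to a
simple path. Along a shortest walk every edge `e` is tight for the distance `d` from `s_k`:
`d (tgt e) = d (src e) + c e`. Every edge of a positive path lies on a used path, so the
positive path consists of tight edges; telescoping, its cost is `d t_k - d s_k ≤ d t_k`, which
is at most the cost of any path. Conversely, a used path is positive, since its own flow is
part of the commodity flow on each of its edges.
-/

namespace RoutingInstance

variable {V E K : Type*} {G : RoutingInstance V E K}

section Walks

variable {c : E → ℝ}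

lemma isWalkFrom_append_iff {s t : V} {l₁ l₂ : List E} :
    G.IsWalkFrom s t (l₁ ++ l₂) ↔ ∃ v, G.IsWalkFrom s v l₁ ∧ G.IsWalkFrom v t l₂ := by
  induction l₁ generalizing s with
  | nil => exact ⟨fun h => ⟨s, rfl, h⟩, fun ⟨v, (hsv : s = v), h⟩ => hsv ▸ h⟩
  | cons e es ih =>
    simp only [List.cons_append, IsWalkFrom, ih]
    constructor
    · rintro ⟨hs, v, h₁, h₂⟩
      exact ⟨v, ⟨hs, h₁⟩, h₂⟩
    · rintro ⟨v, ⟨hs, h₁⟩, h₂⟩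
      exact ⟨hs, v, h₁, h₂⟩

lemma IsWalkFrom.append {s v t : V} {l₁ l₂ : List E} (h₁ : G.IsWalkFrom s v l₁)
    (h₂ : G.IsWalkFrom v t l₂) : G.IsWalkFrom s t (l₁ ++ l₂) :=
  isWalkFrom_append_iff.2 ⟨v, h₁, h₂⟩

lemma isWalkFrom_singleton (e : E) : G.IsWalkFrom (G.src e) (G.tgt e) [e] :=
  ⟨rfl, rfl⟩

lemma IsWalkFrom.exists_suffix_of_mem_walkVerts {a t v : V} {l : List E}
    (hl : G.IsWalkFrom a t l) (hv : v ∈ G.walkVerts a l) :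
    ∃ l₁ l₂, l = l₁ ++ l₂ ∧ G.IsWalkFrom v t l₂ ∧ G.walkVerts v l₂ <:+ G.walkVerts a l := by
  induction l generalizing a with
  | nil =>
    obtain rfl : v = a := List.mem_singleton.1 hv
    exact ⟨[], [], rfl, hl, List.suffix_refl _⟩
  | cons e es ih =>
    rcases List.mem_cons.1 hv with rfl | hv
    · exact ⟨[], e :: es, rfl, hl, List.suffix_refl _⟩
    · obtain ⟨l₁, l₂, rfl, hl₂, hsuf⟩ := ih hl.2 hv
      exact ⟨e :: l₁, l₂, rfl, hl₂, hsuf.trans (List.suffix_cons _ _)⟩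

lemma IsWalkFrom.exists_nodup_sum_le (hc : ∀ e, 0 ≤ c e) {s t : V} {l : List E}
    (hl : G.IsWalkFrom s t l) :
    ∃ l', G.IsWalkFrom s t l' ∧ (G.walkVerts s l').Nodup ∧ (l'.map c).sum ≤ (l.map c).sum := by
  induction l generalizing s with
  | nil => exact ⟨[], hl, List.nodup_singleton s, le_rfl⟩
  | cons e es ih =>
    obtain ⟨l', hl', hnd, hle⟩ := ih hl.2
    have hce := hc e
    by_cases hs : s ∈ G.walkVerts (G.tgt e) l'
    · obtain ⟨l₁, l₂, rfl, hl₂, hsuf⟩ := hl'.exists_suffix_of_mem_walkVerts hs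
      refine ⟨l₂, hl₂, hnd.sublist hsuf.sublist, ?_⟩
      have hl₁ : 0 ≤ (l₁.map c).sum := List.sum_nonneg (by simp [hc])
      simp only [List.map_append, List.sum_append, List.map_cons, List.sum_cons] at hle ⊢
      linarith
    · refine ⟨e :: l', ⟨hl.1, hl'⟩, List.nodup_cons.2 ⟨hs, hnd⟩, ?_⟩
      simp only [List.map_cons, List.sum_cons]
      linarith

variable (G) in
/-- Junk value `sInf ∅ = 0` when there is no walk from `s` to `v`. -/
noncomputable def walkDist (c : E → ℝ) (s v : V) : ℝ :=
  sInf {x | ∃ l, G.IsWalkFrom s v l ∧ (l.map c).sum = x}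

lemma walkDist_le (hc : ∀ e, 0 ≤ c e) {s v : V} {l : List E} (hl : G.IsWalkFrom s v l) :
    G.walkDist c s v ≤ (l.map c).sum :=
  csInf_le ⟨0, by
    rintro x ⟨l', -, rfl⟩
    exact List.sum_nonneg (by simp [hc])⟩ ⟨l, hl, rfl⟩

lemma le_walkDist {s v : V} {y : ℝ} (hne : ∃ l, G.IsWalkFrom s v l)
    (h : ∀ l, G.IsWalkFrom s v l → y ≤ (l.map c).sum) : y ≤ G.walkDist c s v := by
  obtain ⟨l₀, hl₀⟩ := hne
  exact le_csInf ⟨_, l₀, hl₀, rfl⟩ (by rintro x ⟨l, hl, rfl⟩; exact h l hl)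

variable (G) in
def IsShortestWalk (c : E → ℝ) (s t : V) (u : List E) : Prop :=
  G.IsWalkFrom s t u ∧ ∀ l, G.IsWalkFrom s t l → (u.map c).sum ≤ (l.map c).sum

lemma IsShortestWalk.walkDist_tgt_eq (hc : ∀ e, 0 ≤ c e) {s t : V} {u : List E} {e : E}
    (hu : G.IsShortestWalk c s t u) (he : e ∈ u) :
    G.walkDist c s (G.tgt e) = G.walkDist c s (G.src e) + c e := by
  obtain ⟨u₁, u₂, rfl⟩ := List.append_of_mem he
  obtain ⟨_, hu₁, rfl, hu₂⟩ := isWalkFrom_append_iff.1 hu.1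
  apply le_antisymm
  · suffices G.walkDist c s (G.tgt e) - c e ≤ G.walkDist c s (G.src e) by linarith
    refine le_walkDist ⟨u₁, hu₁⟩ fun l hl => ?_
    have := walkDist_le hc (hl.append (isWalkFrom_singleton e))
    simp only [List.map_append, List.sum_append, List.map_singleton, List.sum_singleton] at this
    linarith
  · refine le_walkDist ⟨_, hu₁.append (isWalkFrom_singleton e)⟩ fun l hl => ?_
    have h₁ := walkDist_le hc hu₁
    have h₂ := hu.2 _ (hl.append hu₂)
    simp only [List.map_append, List.sum_append, List.map_cons, List.sum_cons] at h₂
    linarith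

lemma IsWalkFrom.sum_add_walkDist {s a b : V} {l : List E} (hl : G.IsWalkFrom a b l)
    (htight : ∀ e ∈ l, G.walkDist c s (G.tgt e) = G.walkDist c s (G.src e) + c e) :
    (l.map c).sum + G.walkDist c s a = G.walkDist c s b := by
  induction l generalizing a with
  | nil =>
    obtain rfl : a = b := hl
    simp
  | cons e es ih =>
    have he := htight e List.mem_cons_self
    have hes := ih hl.2 fun e' he' => htight e' (List.mem_cons_of_mem _ he')
    rw [hl.1] at he
    simp only [List.map_cons, List.sum_cons]
    linarith

lemma IsWalkFrom.isShortestWalk_of_forall_mem_shortest (hc : ∀ e, 0 ≤ c e) {s t : V}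
    {p : List E} (hp : G.IsWalkFrom s t p)
    (h : ∀ e ∈ p, ∃ u, G.IsShortestWalk c s t u ∧ e ∈ u) : G.IsShortestWalk c s t p := by
  refine ⟨hp, fun q hq => ?_⟩
  have htel := hp.sum_add_walkDist fun e he => by
    obtain ⟨u, hu, heu⟩ := h e he
    exact hu.walkDist_tgt_eq hc heu
  have hs : 0 ≤ G.walkDist c s s :=
    le_walkDist ⟨[], rfl⟩ fun l _ => List.sum_nonneg (by simp [hc])
  have hq := walkDist_le hc hq
  linarith

end Walks

section Flows

variable [DecidableEq E] {f : K → (List E →₀ ℝ)} {k : K} {p : List E}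

lemma exists_used_of_edgeFlowK_pos {e : E} (h : 0 < G.edgeFlowK f k e) :
    ∃ u, G.Used f k u ∧ e ∈ u := by
  have : ∑ u ∈ (f k).support, (0 : ℝ) < ∑ u ∈ (f k).support, if e ∈ u then f k u else 0 := by
    simpa [edgeFlowK, Finsupp.sum] using h
  obtain ⟨u, -, hu⟩ := Finset.exists_lt_of_sum_lt this
  split_ifs at hu with heu
  exacts [⟨u, hu, heu⟩, (lt_irrefl 0 hu).elim]

lemma le_edgeFlowK (hf : ∀ k p, 0 ≤ f k p) {e : E} (he : e ∈ p) :
    f k p ≤ G.edgeFlowK f k e := by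
  by_cases hp : f k p = 0
  · rw [hp]
    exact Finsupp.sum_nonneg fun u _ => by split_ifs; exacts [hf k u, le_rfl]
  · have := Finset.single_le_sum (f := fun u => if e ∈ u then f k u else 0)
      (fun u _ => by split_ifs; exacts [hf k u, le_rfl])
      (Finsupp.mem_support_iff.2 hp)
    simpa [he, edgeFlowK, Finsupp.sum] using this

lemma Used.positivePath (hf : G.Feasible f) (hp : G.Used f k p) : G.PositivePath f k p :=
  ⟨hf.2.1 k p hp.ne', fun _ he => hp.trans_le (le_edgeFlowK hf.1 he)⟩

variable [Fintype K]

variable (G) in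
def edgeCost (f : K → (List E →₀ ℝ)) (e : E) : ℝ :=
  G.latency e (G.edgeFlow f e)

lemma edgeCost_nonneg (hG : G.Standard) (hf : ∀ k p, 0 ≤ f k p) (e : E) :
    0 ≤ G.edgeCost f e :=
  hG.2.1 e _ <| Finset.sum_nonneg fun k _ => Finsupp.sum_nonneg fun p _ => by
    split_ifs
    exacts [hf k p, le_rfl]

lemma IsUNE.isShortestWalk_of_used (hG : G.Standard) (hf : G.Feasible f) (hU : G.IsUNE 1 f)
    (hp : G.Used f k p) : G.IsShortestWalk (G.edgeCost f) (G.source k) (G.sink k) p := by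
  refine ⟨(hf.2.1 k p hp.ne').1, fun l hl => ?_⟩
  obtain ⟨l', hl', hnd, hle⟩ := hl.exists_nodup_sum_le (edgeCost_nonneg hG hf.1)
  have := hU k p l' hp ⟨hl', hnd⟩
  rw [one_mul] at this
  exact this.trans hle

lemma IsUNE.isShortestWalk_of_positivePath (hG : G.Standard) (hf : G.Feasible f)
    (hU : G.IsUNE 1 f) (hp : G.PositivePath f k p) :
    G.IsShortestWalk (G.edgeCost f) (G.source k) (G.sink k) p :=
  hp.1.1.isShortestWalk_of_forall_mem_shortest (edgeCost_nonneg hG hf.1) fun _ he =>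
    let ⟨u, hu, heu⟩ := exists_used_of_edgeFlowK_pos (hp.2 _ he)
    ⟨u, hU.isShortestWalk_of_used hG hf hu, heu⟩

end Flows

end RoutingInstance

open RoutingInstance in
theorem stmt_5_general {V E K : Type*} [Fintype K] [DecidableEq E]
    (G : RoutingInstance V E K) (hG : G.Standard)
    (f : K → (List E →₀ ℝ)) (hf : G.Feasible f) :
    G.IsUNE 1 f ↔ G.IsPNE 1 f := by
  constructor
  · intro hU k p q hp hq
    rw [one_mul]
    exact (hU.isShortestWalk_of_positivePath hG hf hp).2 q hq.1
  · intro hP k p q hp hq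
    exact hP k p q (hp.positivePath hf) hq

open RoutingInstance in
/-- A path flow is a 1-UNE iff its induced edge flow is a 1-PNE. -/
theorem stmt_5 {V E K : Type*} [Fintype V] [Fintype E] [Fintype K] [DecidableEq E]
    (G : RoutingInstance V E K) (hG : G.Standard)
    (f : K → (List E →₀ ℝ)) (hf : G.Feasible f) :
    G.IsUNE 1 f ↔ G.IsPNE 1 f :=
  stmt_5_general G hG f hf
end

section
/- Let θ ≥ 1 and let f be a θ-UNE path flow with induced edge flow x in a multi-commodity routing instance. Then for every feasible edge flow x′ (induced by any feasible path flow f′), the variational inequality Σ_e x_e·ℓ_e(x_e) ≤ θ·Σ_e x′_e·ℓ_e(x_e) holds. -/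
open scoped BigOperators

lemma aux_nodup_of_path {V E K : Type*} (G : RoutingInstance V E K) {k : K} {p : List E}
    (h : G.IsPathOf k p) : p.Nodup := by
  have h2 := h.2
  simp only [RoutingInstance.walkVerts, List.nodup_cons] at h2
  exact h2.2.of_map _

/-- Rewriting an edge-flow-weighted sum as a path-flow-weighted sum. -/
lemma aux_flow_cost_eq {V E K : Type*} [Fintype E] [Fintype K] [DecidableEq E]
    (G : RoutingInstance V E K) (g : K → (List E →₀ ℝ))
    (hg : ∀ k p, g k p ≠ 0 → G.IsPathOf k p) (c : E → ℝ) :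
    ∑ e, G.edgeFlow g e * c e
      = ∑ k, ∑ p ∈ (g k).support, g k p * (p.map c).sum := by
  simp only [RoutingInstance.edgeFlow, RoutingInstance.edgeFlowK, Finsupp.sum,
    Finset.sum_mul, ite_mul, zero_mul]
  rw [Finset.sum_comm]
  refine Finset.sum_congr rfl fun k _ => ?_
  rw [Finset.sum_comm]
  refine Finset.sum_congr rfl fun p hp => ?_
  have hnd : p.Nodup := aux_nodup_of_path G (hg k p (Finsupp.mem_support_iff.mp hp))
  simp only [← List.mem_toFinset]
  rw [Finset.sum_ite_mem, Finset.univ_inter, ← Finset.mul_sum,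
    List.sum_toFinset _ hnd]

/-- The per-commodity averaging inequality. -/
lemma aux_vi {α β : Type*} (s : Finset α) (t : Finset β) (a : α → ℝ) (b : β → ℝ)
    (C : α → ℝ) (D : β → ℝ) (θ d : ℝ) (hd : 0 < d)
    (ha : ∀ p ∈ s, 0 ≤ a p) (hb : ∀ q ∈ t, 0 ≤ b q)
    (hsa : ∑ p ∈ s, a p = d) (hsb : ∑ q ∈ t, b q = d)
    (hC : ∀ p ∈ s, ∀ q ∈ t, C p ≤ θ * D q) :
    ∑ p ∈ s, a p * C p ≤ θ * ∑ q ∈ t, b q * D q := by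
  have key : (∑ p ∈ s, a p * C p) * d ≤ (θ * ∑ q ∈ t, b q * D q) * d := by
    calc (∑ p ∈ s, a p * C p) * d
        = ∑ p ∈ s, ∑ q ∈ t, (a p * b q) * C p := by
          rw [← hsb, Finset.sum_mul]
          exact Finset.sum_congr rfl fun p _ => by
            rw [Finset.mul_sum]; exact Finset.sum_congr rfl fun q _ => by ring
      _ ≤ ∑ p ∈ s, ∑ q ∈ t, (a p * b q) * (θ * D q) := by
          refine Finset.sum_le_sum fun p hp => Finset.sum_le_sum fun q hq => ?_
          exact mul_le_mul_of_nonneg_left (hC p hp q hq)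
            (mul_nonneg (ha p hp) (hb q hq))
      _ = (θ * ∑ q ∈ t, b q * D q) * d := by
          rw [← hsa, Finset.sum_comm, Finset.mul_sum, Finset.sum_comm]
          refine Finset.sum_congr rfl fun p _ => ?_
          rw [Finset.mul_sum, Finset.sum_mul]
          exact Finset.sum_congr rfl fun q _ => by ring
  exact le_of_mul_le_mul_right key hd

open RoutingInstance in
/-- Every θ-UNE path flow with induced edge flow x satisfies the
variational inequality Σ_e x_e ℓ_e(x_e) ≤ θ Σ_e x'_e ℓ_e(x_e) for every feasible
edge flow x' (induced by any feasible path flow f'). -/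
theorem stmt_6 {V E K : Type*} [Fintype V] [Fintype E] [Fintype K] [DecidableEq E]
    (G : RoutingInstance V E K) (hG : G.Standard)
    (θ : ℝ) (hθ : 1 ≤ θ) (f : K → (List E →₀ ℝ)) (hf : G.Feasible f)
    (hune : G.IsUNE θ f)
    (f' : K → (List E →₀ ℝ)) (hf' : G.Feasible f') :
    ∑ e, G.edgeFlow f e * G.latency e (G.edgeFlow f e) ≤
      θ * ∑ e, G.edgeFlow f' e * G.latency e (G.edgeFlow f e) := by
  set c : E → ℝ := fun e => G.latency e (G.edgeFlow f e) with hc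
  rw [aux_flow_cost_eq G f hf.2.1 c, aux_flow_cost_eq G f' hf'.2.1 c, Finset.mul_sum]
  refine Finset.sum_le_sum fun k _ => ?_
  have hcost : ∀ p, (p.map c).sum = G.pathCost f p := fun p => rfl
  refine aux_vi _ _ _ _ (fun p => (p.map c).sum) (fun q => (q.map c).sum) θ
    (G.demand k) (hG.1 k) (fun p _ => hf.1 k p) (fun q _ => hf'.1 k q)
    ?_ ?_ ?_
  · have := hf.2.2 k; simpa [Finsupp.sum] using this
  · have := hf'.2.2 k; simpa [Finsupp.sum] using this
  · intro p hp q hq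
    rw [hcost, hcost]
    refine hune k p q ?_ (hf'.2.1 k q (Finsupp.mem_support_iff.mp hq))
    exact lt_of_le_of_ne (hf.1 k p) (Ne.symm (Finsupp.mem_support_iff.mp hp))
end

section
/- For every θ > 1 and every M ≥ 1 there exists a single-commodity routing instance (two parallel edges from s to t, upper edge latency ε·x and lower edge constant latency L, unit demand, for suitable ε > 0 and L > ε) and a feasible path flow f″ with induced edge flow x″ such that the variational inequality Σ_e x″_e·ℓ_e(x″_e) ≤ θ·Σ_e x′_e·ℓ_e(x″_e) holds for every feasible edge flow x′, yet f″ is not an M-UNE. -/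
open scoped BigOperators

open RoutingInstance in
/-- For every θ > 1 and M ≥ 1 there is a Pigou-type instance (two
parallel edges, upper latency ε·x, lower constant latency L, unit demand, 0 < ε < L)
and a feasible path flow f″ satisfying the θ-variational inequality against every
feasible flow, which is nevertheless not an M-UNE. -/
theorem stmt_7 (θ M : ℝ) (hθ : 1 < θ) (hM : 1 ≤ M) :
    ∃ (G : RoutingInstance (Fin 2) (Fin 2) Unit) (ε L : ℝ),
      0 < ε ∧ ε < L ∧ G.Standard ∧
      (∀ e, G.src e = 0) ∧ (∀ e, G.tgt e = 1) ∧
      G.source () = 0 ∧ G.sink () = 1 ∧ G.demand () = 1 ∧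
      (∀ x : ℝ, G.latency 0 x = ε * x) ∧ (∀ x : ℝ, G.latency 1 x = L) ∧
      ∃ f'' : Unit → (List (Fin 2) →₀ ℝ), G.Feasible f'' ∧
        (∀ f' : Unit → (List (Fin 2) →₀ ℝ), G.Feasible f' →
          ∑ e, G.edgeFlow f'' e * G.latency e (G.edgeFlow f'' e) ≤
            θ * ∑ e, G.edgeFlow f' e * G.latency e (G.edgeFlow f'' e)) ∧
        ¬ G.IsUNE M f'' := by
  -- parameters
  set δ : ℝ := (θ - 1) / (M + θ + 1) with hδdef
  have hden : (0:ℝ) < M + θ + 1 := by linarith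
  have hδpos : 0 < δ := div_pos (by linarith) hden
  have hδlt : δ < 1 := by rw [hδdef, div_lt_one hden]; linarith
  have hkey : δ * (M + θ + 1) = θ - 1 := by
    rw [hδdef, div_mul_cancel₀]; exact ne_of_gt hden
  -- the instance
  set G : RoutingInstance (Fin 2) (Fin 2) Unit :=
    { src := fun _ => 0, tgt := fun _ => 1, source := fun _ => 0, sink := fun _ => 1,
      demand := fun _ => 1, latency := fun e x => if e = 0 then x else M + 1 } with hG
  -- paths
  have hpath0 : G.IsPathOf () [(0 : Fin 2)] := by
    constructor
    · exact ⟨rfl, rfl⟩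
    · simp [RoutingInstance.walkVerts, hG]
  have hpath1 : G.IsPathOf () [(1 : Fin 2)] := by
    constructor
    · exact ⟨rfl, rfl⟩
    · simp [RoutingInstance.walkVerts, hG]
  have hpaths : ∀ p, G.IsPathOf () p → p = [(0:Fin 2)] ∨ p = [(1:Fin 2)] := by
    rintro (_ | ⟨e, _ | ⟨e', es⟩⟩) hp
    · exfalso
      have := hp.1
      simp [RoutingInstance.IsWalkFrom, hG] at this
    · fin_cases e
      · exact Or.inl rfl
      · exact Or.inr rfl
    · exfalso
      have := hp.1
      simp [RoutingInstance.IsWalkFrom, hG] at this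
  -- the flow
  set f'' : Unit → (List (Fin 2) →₀ ℝ) :=
    fun _ => Finsupp.single [(0:Fin 2)] (1 - δ) + Finsupp.single [(1:Fin 2)] δ with hf''
  have hval : ∀ p, f'' () p =
      (if p = [(0:Fin 2)] then (1-δ) else 0) + (if p = [(1:Fin 2)] then δ else 0) := by
    intro p
    simp only [hf'', Finsupp.add_apply, Finsupp.single_apply, eq_comm]
  -- edge flow under f''
  have hefK : ∀ e : Fin 2, G.edgeFlowK f'' () e =
      (if e ∈ [(0:Fin 2)] then (1-δ) else 0) + (if e ∈ [(1:Fin 2)] then δ else 0) := by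
    intro e
    rw [RoutingInstance.edgeFlowK, hf'']
    rw [Finsupp.sum_add_index' (fun _ => by simp) (fun a b₁ b₂ => by split <;> simp)]
    rw [Finsupp.sum_single_index (by simp), Finsupp.sum_single_index (by simp)]
  have hef : ∀ e : Fin 2, G.edgeFlow f'' e =
      (if e ∈ [(0:Fin 2)] then (1-δ) else 0) + (if e ∈ [(1:Fin 2)] then δ else 0) := by
    intro e
    rw [RoutingInstance.edgeFlow, Finset.sum_eq_single_of_mem () (Finset.mem_univ ())
      (by intro b _ hb; exact absurd rfl hb)]
    exact hefK e
  have hef0 : G.edgeFlow f'' 0 = 1 - δ := by rw [hef]; norm_num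
  have hef1 : G.edgeFlow f'' 1 = δ := by rw [hef]; norm_num
  have hlat0 : ∀ x : ℝ, G.latency 0 x = x := fun x => by simp [hG]
  have hlat1 : ∀ x : ℝ, G.latency 1 x = M + 1 := fun x => by simp [hG]
  refine ⟨G, 1, M + 1, one_pos, by linarith, ?_, fun e => rfl, fun e => rfl, rfl, rfl, rfl,
    fun x => by rw [hlat0, one_mul], fun x => hlat1 x, f'', ?_, ?_, ?_⟩
  · -- Standard
    refine ⟨fun _ => one_pos, ?_, ?_⟩
    · intro e x hx
      simp only [hG]
      split <;> [exact hx; linarith]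
    · intro e
      simp only [hG]
      split
      · exact fun a _ b _ hab => hab
      · exact fun a _ b _ _ => le_refl _
  · -- Feasible
    refine ⟨?_, ?_, ?_⟩
    · intro k p
      rw [hval p]
      have : (0:ℝ) ≤ 1 - δ := by linarith
      positivity
    · intro k p hp
      rw [hval p] at hp
      by_cases h0 : p = [(0:Fin 2)]
      · rw [h0]; exact hpath0
      · by_cases h1 : p = [(1:Fin 2)]
        · rw [h1]; exact hpath1
        · simp [h0, h1] at hp
    · intro k
      rw [hf'']
      rw [Finsupp.sum_add_index' (fun _ => rfl) (fun _ _ _ => rfl)]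
      rw [Finsupp.sum_single_index rfl, Finsupp.sum_single_index rfl]
      ring
  · -- variational inequality
    intro f' hf'
    obtain ⟨hnn, hsupp, hdem⟩ := hf'
    set a := G.edgeFlow f' 0 with ha
    set b := G.edgeFlow f' 1 with hb
    have haK : ∀ e : Fin 2, G.edgeFlow f' e = G.edgeFlowK f' () e := by
      intro e
      rw [RoutingInstance.edgeFlow, Finset.sum_eq_single_of_mem () (Finset.mem_univ ())
        (by intro b _ hb; exact absurd rfl hb)]
    have hannK : ∀ e : Fin 2, 0 ≤ G.edgeFlowK f' () e := by
      intro e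
      apply Finset.sum_nonneg
      intro p _
      dsimp only
      split
      · exact hnn () p
      · exact le_refl _
    have hann : 0 ≤ a := by rw [ha, haK]; exact hannK 0
    have hbnn : 0 ≤ b := by rw [hb, haK]; exact hannK 1
    have habsum : a + b = 1 := by
      rw [ha, hb, haK, haK, RoutingInstance.edgeFlowK, RoutingInstance.edgeFlowK,
        ← Finsupp.sum_add]
      rw [Finsupp.sum_congr (g2 := fun _ v => v) ?_, hdem ()]
      intro p hp
      rcases hpaths p (hsupp () p (Finsupp.mem_support_iff.mp hp)) with h | h <;>
        subst h <;> norm_num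
    rw [Fin.sum_univ_two, Fin.sum_univ_two, hef0, hef1, hlat0, hlat1, ← ha, ← hb]
    have h1 : 1 - δ ≤ a * (1 - δ) + b * (M + 1) := by nlinarith
    have hθpos : 0 < θ := by linarith
    have h2 : (1 - δ) * (1 - δ) + δ * (M + 1) ≤ θ * (1 - δ) := by nlinarith
    calc (1 - δ) * (1 - δ) + δ * (M + 1) ≤ θ * (1 - δ) := h2
      _ ≤ θ * (a * (1 - δ) + b * (M + 1)) := by nlinarith
  · -- not an M-UNE
    intro hune
    have hused : G.Used f'' () [(1:Fin 2)] := by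
      rw [RoutingInstance.Used, hval]
      norm_num
      exact hδpos
    have := hune () [(1:Fin 2)] [(0:Fin 2)] hused hpath0
    rw [RoutingInstance.pathCost, RoutingInstance.pathCost] at this
    simp only [List.map_cons, List.map_nil, List.sum_cons, List.sum_nil, add_zero] at this
    rw [hef0, hef1] at this
    norm_num [hG] at this
    nlinarith
end

section
/- Let L be a class of latency functions, θ ≥ 1, and define ω(L, λ) = sup_{ℓ∈L} sup_{x,x′≥0} (ℓ(x) − λℓ(x′))·x′ / (x·ℓ(x)). Let λ > 0 be such that θ·ω(L, λ) < 1. Then for any routing instance whose latency functions all belong to L, any feasible edge flow x satisfying the variational inequality Σ_e x_e·ℓ_e(x_e) ≤ θ·Σ_e y_e·ℓ_e(x_e) for all feasible edge flows y, and any socially optimal edge flow y*, we have SC(x) ≤ (θλ/(1 − θ·ω(L, λ)))·SC(y*). -/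
open scoped BigOperators

open RoutingInstance in
/-- Let L be a class of latency functions, θ ≥ 1, λ > 0 and ω an upper
bound as in the definition of ω(L, λ) (i.e. (ℓ(x) − λℓ(x′))·x′ ≤ ω·x·ℓ(x) for all
ℓ ∈ L and x, x′ ≥ 0), with θ·ω < 1.  Then for any instance with latencies in L, any
feasible edge flow satisfying the θ-variational inequality, and any socially optimal
flow y, we have SC(x) ≤ (θλ/(1 − θω))·SC(y). -/
theorem stmt_8 {V E K : Type*} [Fintype V] [Fintype E] [Fintype K] [DecidableEq E]
    (L : Set (ℝ → ℝ)) (θ lam ω : ℝ) (hθ : 1 ≤ θ) (hlam : 0 < lam)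
    (hω : ∀ ℓ ∈ L, ∀ x x' : ℝ, 0 ≤ x → 0 ≤ x' → (ℓ x - lam * ℓ x') * x' ≤ ω * (x * ℓ x))
    (hθω : θ * ω < 1)
    (G : RoutingInstance V E K) (hG : G.Standard) (hL : ∀ e, G.latency e ∈ L)
    (f : K → (List E →₀ ℝ)) (hf : G.Feasible f)
    (hVI : ∀ g : K → (List E →₀ ℝ), G.Feasible g →
      G.socialCost f ≤ θ * ∑ e, G.edgeFlow g e * G.latency e (G.edgeFlow f e))
    (y : K → (List E →₀ ℝ)) (hy : G.Feasible y)
    (hopt : ∀ g : K → (List E →₀ ℝ), G.Feasible g → G.socialCost y ≤ G.socialCost g) :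
    G.socialCost f ≤ (θ * lam / (1 - θ * ω)) * G.socialCost y := by
  have hnn : ∀ (g : K → (List E →₀ ℝ)), G.Feasible g → ∀ e, 0 ≤ G.edgeFlow g e := by
    intro g hg e
    refine Finset.sum_nonneg fun k _ => ?_
    unfold RoutingInstance.edgeFlowK
    rw [Finsupp.sum]
    refine Finset.sum_nonneg fun p _ => ?_
    split_ifs
    · exact hg.1 k p
    · exact le_rfl
  have hxf := hnn f hf
  have hyf := hnn y hy
  have key : ∀ e, G.edgeFlow y e * G.latency e (G.edgeFlow f e) ≤
      ω * (G.edgeFlow f e * G.latency e (G.edgeFlow f e)) +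
      lam * (G.edgeFlow y e * G.latency e (G.edgeFlow y e)) := by
    intro e
    have := hω (G.latency e) (hL e) (G.edgeFlow f e) (G.edgeFlow y e) (hxf e) (hyf e)
    nlinarith [this]
  have h1 : G.socialCost f ≤ θ * (ω * G.socialCost f + lam * G.socialCost y) := by
    have := hVI y hy
    have hsum : ∑ e, G.edgeFlow y e * G.latency e (G.edgeFlow f e) ≤
        ω * G.socialCost f + lam * G.socialCost y := by
      unfold RoutingInstance.socialCost
      rw [Finset.mul_sum, Finset.mul_sum, ← Finset.sum_add_distrib]
      exact Finset.sum_le_sum fun e _ => key e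
    calc G.socialCost f ≤ θ * ∑ e, G.edgeFlow y e * G.latency e (G.edgeFlow f e) := this
      _ ≤ θ * (ω * G.socialCost f + lam * G.socialCost y) := by
          exact mul_le_mul_of_nonneg_left hsum (by linarith)
  have h2 : 0 < 1 - θ * ω := by linarith
  rw [div_mul_eq_mul_div, le_div_iff₀ h2]
  nlinarith [h1]
end

section
/- For every M ≥ 1 there exists a single-commodity routing instance (two parallel edges with latencies ε·x and constant L, unit demand, for suitable ε > 0 and L > 2ε), a 1-EF path flow f in that instance, and a socially optimal edge flow x*, such that SC(f) > M·SC(x*). Hence the price of anarchy of 1-EF flows is unbounded. -/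
open scoped BigOperators

/-- The Pigou instance with latencies `x` on edge 0 and constant `L` on edge 1. -/
def pigou (L : ℝ) : RoutingInstance (Fin 2) (Fin 2) Unit where
  src _ := 0
  tgt _ := 1
  source _ := 0
  sink _ := 1
  demand _ := 1
  latency e x := if e = 0 then x else L

lemma pigou_path (L : ℝ) (p : List (Fin 2)) (h : (pigou L).IsPathOf () p) :
    p = [0] ∨ p = [1] := by
  obtain ⟨hw, hn⟩ := h
  match p with
  | [] => exact absurd hw (by simp [pigou, RoutingInstance.IsWalkFrom])
  | [e] => fin_cases e <;> simp
  | e :: e' :: l =>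
    exfalso
    simp [pigou, RoutingInstance.walkVerts, List.nodup_cons] at hn

lemma pigou_isPath (L : ℝ) (e : Fin 2) : (pigou L).IsPathOf () [e] := by
  refine ⟨⟨rfl, rfl⟩, ?_⟩
  simp [pigou, RoutingInstance.walkVerts]

lemma edgeFlow_eq (L : ℝ) (g : Unit → (List (Fin 2) →₀ ℝ)) (e : Fin 2) :
    (pigou L).edgeFlow g e = (g ()).sum fun p v => if e ∈ p then v else 0 := by
  simp [RoutingInstance.edgeFlow, RoutingInstance.edgeFlowK]

lemma edgeFlow_single (L c : ℝ) (p0 : List (Fin 2)) (e : Fin 2) :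
    (pigou L).edgeFlow (fun _ => Finsupp.single p0 c) e = if e ∈ p0 then c else 0 := by
  rw [edgeFlow_eq, Finsupp.sum_single_index (by simp)]

lemma feasible_single (L : ℝ) (e : Fin 2) :
    (pigou L).Feasible (fun _ => Finsupp.single [e] 1) := by
  refine ⟨fun k p => ?_, fun k p hp => ?_, fun k => ?_⟩
  · rw [Finsupp.single_apply]; split <;> norm_num
  · have : p = [e] := by
      by_contra hne
      rw [Finsupp.single_apply, if_neg (fun h => hne h.symm)] at hp
      exact hp rfl
    subst this; exact pigou_isPath L e
  · rw [Finsupp.sum_single_index rfl]; rfl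

lemma sc_eq (L : ℝ) (g : Unit → (List (Fin 2) →₀ ℝ)) :
    (pigou L).socialCost g =
      (pigou L).edgeFlow g 0 * (pigou L).edgeFlow g 0 + (pigou L).edgeFlow g 1 * L := by
  rw [RoutingInstance.socialCost, Fin.sum_univ_two]
  simp [pigou]

lemma sc_lower (L : ℝ) (hL : (3:ℝ) ≤ L) (g : Unit → (List (Fin 2) →₀ ℝ))
    (hg : (pigou L).Feasible g) : 1 ≤ (pigou L).socialCost g := by
  obtain ⟨hnn, hpath, hsum⟩ := hg
  set a := (pigou L).edgeFlow g 0 with ha_def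
  set b := (pigou L).edgeFlow g 1 with hb_def
  have ha : 0 ≤ a := by
    rw [ha_def, edgeFlow_eq]
    exact Finset.sum_nonneg fun p _ => by dsimp only; split <;> [exact hnn () p; rfl]
  have hb : 0 ≤ b := by
    rw [hb_def, edgeFlow_eq]
    exact Finset.sum_nonneg fun p _ => by dsimp only; split <;> [exact hnn () p; rfl]
  have hab : a + b = 1 := by
    rw [ha_def, hb_def, edgeFlow_eq, edgeFlow_eq, Finsupp.sum, Finsupp.sum,
      ← Finset.sum_add_distrib]
    have : ∀ p ∈ (g ()).support,
        ((if (0:Fin 2) ∈ p then g () p else 0) + (if (1:Fin 2) ∈ p then g () p else 0))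
          = g () p := by
      intro p hp
      rcases pigou_path L p (hpath () p (Finsupp.mem_support_iff.mp hp)) with h | h <;>
        simp [h]
    rw [Finset.sum_congr rfl this]
    exact hsum ()
  rw [sc_eq]
  nlinarith

open RoutingInstance in
/-- For every M ≥ 1 there is a Pigou-type instance (latencies ε·x and
constant L with 0 < ε and L > 2ε, unit demand), a 1-EF path flow f and a socially
optimal flow x* with SC(f) > M·SC(x*); hence the price of anarchy of 1-EF flows is
unbounded. -/
theorem stmt_9 (M : ℝ) (hM : 1 ≤ M) :
    ∃ (G : RoutingInstance (Fin 2) (Fin 2) Unit) (ε L : ℝ),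
      0 < ε ∧ 2 * ε < L ∧ G.Standard ∧
      (∀ e, G.src e = 0) ∧ (∀ e, G.tgt e = 1) ∧
      G.source () = 0 ∧ G.sink () = 1 ∧ G.demand () = 1 ∧
      (∀ x : ℝ, G.latency 0 x = ε * x) ∧ (∀ x : ℝ, G.latency 1 x = L) ∧
      ∃ f xstar : Unit → (List (Fin 2) →₀ ℝ),
        G.Feasible f ∧ G.IsEF 1 f ∧ G.Feasible xstar ∧
        (∀ g : Unit → (List (Fin 2) →₀ ℝ), G.Feasible g →
          G.socialCost xstar ≤ G.socialCost g) ∧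
        M * G.socialCost xstar < G.socialCost f := by
  have hL : (3:ℝ) ≤ 2 * M + 1 := by linarith
  refine ⟨pigou (2*M+1), 1, 2*M+1, one_pos, by linarith, ?_, fun e => rfl, fun e => rfl,
    rfl, rfl, rfl, fun x => by simp [pigou], fun x => by simp [pigou],
    fun _ => Finsupp.single [1] 1, fun _ => Finsupp.single [0] 1,
    feasible_single _ 1, ?_, feasible_single _ 0, ?_, ?_⟩
  · refine ⟨fun k => one_pos, fun e x hx => ?_, fun e => ?_⟩
    · simp only [pigou]; split <;> linarith
    · intro x _ y _ hxy
      simp only [pigou]; split <;> simp [hxy]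
  · -- IsEF
    intro k p q hp hq
    have hp1 : p = [1] := by
      by_contra hne
      rw [RoutingInstance.Used, Finsupp.single_apply, if_neg (fun h => hne h.symm)] at hp
      exact lt_irrefl 0 hp
    have hq1 : q = [1] := by
      by_contra hne
      rw [RoutingInstance.Used, Finsupp.single_apply, if_neg (fun h => hne h.symm)] at hq
      exact lt_irrefl 0 hq
    subst hp1; subst hq1
    rw [one_mul]
  · -- optimality of xstar
    intro g hg
    have h1 : (pigou (2*M+1)).socialCost (fun _ => Finsupp.single [0] 1) = 1 := by
      rw [sc_eq, edgeFlow_single, edgeFlow_single]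
      norm_num
    rw [h1]
    exact sc_lower _ hL g hg
  · -- gap
    have h1 : (pigou (2*M+1)).socialCost (fun _ => Finsupp.single [0] 1) = 1 := by
      rw [sc_eq, edgeFlow_single, edgeFlow_single]; norm_num
    have h2 : (pigou (2*M+1)).socialCost (fun _ => Finsupp.single [1] 1) = 2*M+1 := by
      rw [sc_eq, edgeFlow_single, edgeFlow_single]; norm_num
    rw [h1, h2]; linarith
end

section
/- Let γ ≥ 1 and suppose every latency function ℓ_e of a multi-commodity routing instance is differentiable and satisfies ℓ_e(x) + x·ℓ_e′(x) ≤ γ·ℓ_e(x) for all x ≥ 0. Then every socially optimal edge flow is a γ-PNE: for every commodity k, every positive path p ∈ P^k satisfies ℓ_p ≤ γ·ℓ_q for every path q ∈ P^k. -/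
open scoped BigOperators

/-!
Moving `ε` units of commodity `k` from a used path `r` to another `s_k`–`t_k` path `q` keeps
the flow feasible for small `ε ≥ 0`, so at an optimum the right derivative of the social cost,
`∑_{e ∈ q} m_e - ∑_{e ∈ r} m_e` with marginal costs `m_e = ℓ_e(x_e) + x_e ℓ_e'(x_e) ≥ 0`,
is nonnegative: used paths are shortest for the weights `m`.
A positive path need not be used, but each of its edges lies on a used path. Two prefixes of
shortest walks that end at the same vertex have the same `m`-weight (swap the suffixes), so
walking along a positive path edge by edge shows that it is `m`-shortest as well.
Finally `ℓ_e ≤ m_e ≤ γ ℓ_e` gives `ℓ_p ≤ m(p) ≤ m(q) ≤ γ ℓ_q`.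
-/

theorem deriv_nonneg_of_monotoneOn_Ici {φ : ℝ → ℝ} {a x : ℝ} (hφ : MonotoneOn φ (Set.Ici a))
    (hx : a ≤ x) (hd : DifferentiableAt ℝ φ x) : 0 ≤ deriv φ x :=
  hd.derivWithin (uniqueDiffOn_Ici a x hx) ▸ hφ.derivWithin_nonneg

theorem HasDerivAt.nonneg_of_forall_Ioo_le {h : ℝ → ℝ} {D a b : ℝ} (hd : HasDerivAt h D a)
    (hab : a < b) (hmin : ∀ x ∈ Set.Ioo a b, h a ≤ h x) : 0 ≤ D := by
  have hslope : Filter.Tendsto (slope h a) (nhdsWithin a (Set.Ioi a)) (nhds D) :=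
    (hasDerivAt_iff_tendsto_slope.1 hd).mono_left (nhdsWithin_mono a fun x hx => ne_of_gt hx)
  refine ge_of_tendsto hslope ?_
  filter_upwards [Ioo_mem_nhdsGT hab] with x hx
  rw [slope_def_field]
  exact div_nonneg (sub_nonneg.2 (hmin x hx)) (sub_pos.2 hx.1).le

theorem hasDerivAt_mul_comp_add_mul {φ : ℝ → ℝ} {x : ℝ} (hφ : DifferentiableAt ℝ φ x) (c : ℝ) :
    HasDerivAt (fun ε => (x + ε * c) * φ (x + ε * c)) (c * (φ x + x * deriv φ x)) 0 := by
  have hline : HasDerivAt (fun ε : ℝ => x + ε * c) c 0 := by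
    simpa using ((hasDerivAt_id (0 : ℝ)).mul_const c).const_add x
  have hcost : HasDerivAt (fun y => y * φ y) (φ x + x * deriv φ x) (x + 0 * c) := by
    simpa using (hasDerivAt_id' x).fun_mul hφ.hasDerivAt
  exact (hcost.comp 0 hline).congr_deriv (mul_comm _ _)

theorem Finset.sum_ite_mem_eq_sum_map {E M : Type*} [Fintype E] [DecidableEq E]
    [AddCommMonoid M] {q : List E} (hq : q.Nodup) (m : E → M) :
    ∑ e, (if e ∈ q then m e else 0) = (q.map m).sum := by
  rw [← List.sum_toFinset m hq, ← Finset.sum_filter]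
  congr 1
  ext
  simp

namespace RoutingInstance

variable {V E K : Type*} (G : RoutingInstance V E K)

section Walks

theorem isWalkFrom_append_s11 {s t : V} {a b : List E} :
    G.IsWalkFrom s t (a ++ b) ↔ ∃ v, G.IsWalkFrom s v a ∧ G.IsWalkFrom v t b := by
  induction a generalizing s with
  | nil => exact ⟨fun h => ⟨s, rfl, h⟩, fun ⟨_, hs, h⟩ => hs ▸ h⟩
  | cons e a ih => simp only [List.cons_append, IsWalkFrom, ih, exists_and_left, and_assoc]

theorem exists_sublist_isWalkFrom_nodup {s t : V} :
    ∀ {l : List E}, G.IsWalkFrom s t l →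
      ∃ m, m.Sublist l ∧ G.IsWalkFrom s t m ∧ (G.walkVerts s m).Nodup
  | [], h => ⟨[], .refl _, h, List.nodup_singleton s⟩
  | e :: l, h => by
    by_cases hs : s ∈ (e :: l).map G.tgt
    · -- the walk returns to `s`: drop the closed walk before that return
      obtain ⟨e', he', hs⟩ := List.mem_map.1 hs
      obtain ⟨a, b, hab⟩ := List.append_of_mem he'
      rw [hab, isWalkFrom_append_s11] at h
      obtain ⟨_, -, -, hb⟩ := h
      rw [hs] at hb
      have : b.length ≤ l.length := by have := congrArg List.length hab; simp at this; omega
      obtain ⟨m, hm, hw, hnd⟩ := exists_sublist_isWalkFrom_nodup hb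
      exact ⟨m, hm.trans (hab ▸ (List.sublist_cons_self e' b).trans (List.sublist_append_right a _)),
        hw, hnd⟩
    · obtain ⟨hsrc, hl⟩ := h
      obtain ⟨m, hm, hw, hnd⟩ := exists_sublist_isWalkFrom_nodup hl
      exact ⟨e :: m, hm.cons_cons e, ⟨hsrc, hw⟩,
        List.nodup_cons.2 ⟨fun h' => hs (((hm.cons_cons e).map G.tgt).subset h'), hnd⟩⟩
termination_by l => l.length

theorem nodup_of_nodup_walkVerts {s : V} {l : List E} (h : (G.walkVerts s l).Nodup) : l.Nodup :=
  (List.nodup_cons.1 h).2.of_map G.tgt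

end Walks

section ShortestWalks

def IsPrefixWeight (w : E → ℝ) (s t : V) (U : Set (List E)) (v : V) (a : ℝ) : Prop :=
  ∃ r₁ r₂, r₁ ++ r₂ ∈ U ∧ G.IsWalkFrom s v r₁ ∧ G.IsWalkFrom v t r₂ ∧ (r₁.map w).sum = a

variable {w : E → ℝ}

theorem le_sum_map_of_isWalkFrom (hw : ∀ e, 0 ≤ w e) {s t : V} {c : ℝ}
    (h : ∀ q, G.IsWalkFrom s t q → (G.walkVerts s q).Nodup → c ≤ (q.map w).sum)
    {l : List E} (hl : G.IsWalkFrom s t l) : c ≤ (l.map w).sum := by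
  obtain ⟨m, hm, hmw, hnd⟩ := G.exists_sublist_isWalkFrom_nodup hl
  exact (h m hmw hnd).trans ((hm.map w).sum_le_sum (List.forall_mem_map.2 fun e _ => hw e))

variable {s t : V} {U : Set (List E)}

theorem IsPrefixWeight.le
    (hU : ∀ u ∈ U, ∀ l, G.IsWalkFrom s t l → (u.map w).sum ≤ (l.map w).sum)
    {v : V} {a a' : ℝ} (ha : G.IsPrefixWeight w s t U v a) (ha' : G.IsPrefixWeight w s t U v a') :
    a ≤ a' := by
  obtain ⟨r₁, r₂, hr, -, hr₂, rfl⟩ := ha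
  obtain ⟨r₁', -, -, hr₁', -, rfl⟩ := ha'
  simpa using hU _ hr (r₁' ++ r₂) (G.isWalkFrom_append_s11.2 ⟨v, hr₁', hr₂⟩)

theorem exists_isPrefixWeight_of_mem (hUw : ∀ u ∈ U, G.IsWalkFrom s t u) {u : List E} {e : E}
    (hu : u ∈ U) (he : e ∈ u) :
    ∃ b, G.IsPrefixWeight w s t U (G.src e) b ∧ G.IsPrefixWeight w s t U (G.tgt e) (b + w e) := by
  obtain ⟨a, b, rfl⟩ := List.append_of_mem he
  obtain ⟨v, ha, rfl, hb⟩ := G.isWalkFrom_append_s11.1 (hUw _ hu)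
  refine ⟨(a.map w).sum, ⟨a, e :: b, hu, ha, ⟨rfl, hb⟩, rfl⟩,
    ⟨a ++ [e], b, by simpa using hu, G.isWalkFrom_append_s11.2 ⟨_, ha, rfl, rfl⟩, hb, by simp⟩⟩

theorem add_sum_map_le_of_isPrefixWeight (hw : ∀ e, 0 ≤ w e)
    (hU : ∀ u ∈ U, ∀ l, G.IsWalkFrom s t l → (u.map w).sum ≤ (l.map w).sum)
    (hUw : ∀ u ∈ U, G.IsWalkFrom s t u) {q : List E} (hq : G.IsWalkFrom s t q) :
    ∀ {l : List E} {v : V} {a : ℝ}, G.IsWalkFrom v t l → (∀ e ∈ l, ∃ u ∈ U, e ∈ u) →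
      G.IsPrefixWeight w s t U v a → a + (l.map w).sum ≤ (q.map w).sum
  | [], v, a, hl, _, ⟨r₁, r₂, hr, _, _, ha⟩ => by
    obtain rfl : v = t := hl
    have hr₂ : 0 ≤ (r₂.map w).sum := List.sum_nonneg (List.forall_mem_map.2 fun e _ => hw e)
    have := hU _ hr q hq
    simp only [List.map_append, List.sum_append] at this
    simp only [List.map_nil, List.sum_nil]
    linarith
  | e :: l, v, a, ⟨hsrc, hl⟩, hlU, ha => by
    obtain ⟨u, hu, heu⟩ := hlU e List.mem_cons_self
    obtain ⟨b, hb, hb'⟩ := G.exists_isPrefixWeight_of_mem hUw hu heu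
    have hab : a ≤ b := IsPrefixWeight.le G hU ha (hsrc ▸ hb)
    have := add_sum_map_le_of_isPrefixWeight hw hU hUw hq hl
      (fun e' he' => hlU e' (List.mem_cons_of_mem _ he')) hb'
    simp only [List.map_cons, List.sum_cons]
    linarith

theorem sum_map_le_of_forall_mem_shortest (hw : ∀ e, 0 ≤ w e)
    (hU : ∀ u ∈ U, ∀ l, G.IsWalkFrom s t l → (u.map w).sum ≤ (l.map w).sum)
    (hUw : ∀ u ∈ U, G.IsWalkFrom s t u) {p q : List E} (hp : G.IsWalkFrom s t p)
    (hpU : ∀ e ∈ p, ∃ u ∈ U, e ∈ u) (hq : G.IsWalkFrom s t q) :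
    (p.map w).sum ≤ (q.map w).sum := by
  cases p with
  | nil => simpa using List.sum_nonneg (List.forall_mem_map.2 fun e _ => hw e)
  | cons e p =>
    obtain ⟨u, hu, -⟩ := hpU e List.mem_cons_self
    simpa using G.add_sum_map_le_of_isPrefixWeight hw hU hUw hq hp hpU
      ⟨[], u, hu, rfl, hUw u hu, rfl⟩

end ShortestWalks

section Flows

variable {f : K → (List E →₀ ℝ)}

theorem edgeFlowK_nonneg [DecidableEq E] (hf : ∀ k p, 0 ≤ f k p) (k : K) (e : E) :
    0 ≤ G.edgeFlowK f k e :=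
  Finset.sum_nonneg fun p _ => ite_nonneg (hf k p) le_rfl

theorem edgeFlow_nonneg [Fintype K] [DecidableEq E] (hf : ∀ k p, 0 ≤ f k p) (e : E) :
    0 ≤ G.edgeFlow f e :=
  Finset.sum_nonneg fun k _ => G.edgeFlowK_nonneg hf k e

theorem exists_pos_mem_of_edgeFlowK_pos [DecidableEq E] {k : K} {e : E}
    (h : 0 < G.edgeFlowK f k e) : ∃ p, 0 < f k p ∧ e ∈ p := by
  have : ∑ p ∈ (f k).support, (0 : ℝ) < ∑ p ∈ (f k).support, if e ∈ p then f k p else 0 := by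
    simpa [edgeFlowK, Finsupp.sum] using h
  obtain ⟨p, -, hp⟩ := Finset.exists_lt_of_sum_lt this
  split_ifs at hp with he
  · exact ⟨p, hp, he⟩
  · exact absurd hp (lt_irrefl 0)

noncomputable def marginalCost [Fintype K] [DecidableEq E] (f : K → (List E →₀ ℝ)) (e : E) : ℝ :=
  G.latency e (G.edgeFlow f e) + G.edgeFlow f e * deriv (G.latency e) (G.edgeFlow f e)

variable [DecidableEq K] {k : K} {r q : List E} {ε : ℝ}

noncomputable def shiftFlow (f : K → (List E →₀ ℝ)) (k : K) (r q : List E) (ε : ℝ) :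
    K → (List E →₀ ℝ) :=
  Function.update f k (f k + Finsupp.single q ε - Finsupp.single r ε)

theorem shiftFlow_zero : shiftFlow f k r q 0 = f := by
  simp [shiftFlow]

theorem shiftFlow_self_apply [DecidableEq E] (p : List E) :
    shiftFlow f k r q ε k p = f k p + (if q = p then ε else 0) - (if r = p then ε else 0) := by
  simp [shiftFlow, Finsupp.single_apply]

theorem shiftFlow_of_ne {k' : K} (hk : k' ≠ k) : shiftFlow f k r q ε k' = f k' :=
  Function.update_of_ne hk _ _

theorem sum_shiftFlow_self {h : List E → ℝ → ℝ} (h_zero : ∀ p, h p 0 = 0)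
    (h_add : ∀ p a b, h p (a + b) = h p a + h p b) :
    (shiftFlow f k r q ε k).sum h = (f k).sum h + h q ε - h r ε := by
  have h_sub : ∀ p a b, h p (a - b) = h p a - h p b := fun p a b =>
    eq_sub_of_add_eq (by rw [← h_add, sub_add_cancel])
  rw [shiftFlow, Function.update_self, Finsupp.sum_sub_index h_sub,
    Finsupp.sum_add_index' h_zero h_add, Finsupp.sum_single_index (h_zero q),
    Finsupp.sum_single_index (h_zero r)]

theorem feasible_shiftFlow (hf : G.Feasible f) (hq : G.IsPathOf k q) (hε : 0 ≤ ε)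
    (hεr : ε ≤ f k r) : G.Feasible (shiftFlow f k r q ε) := by
  classical
  obtain ⟨hf0, hfs, hfd⟩ := hf
  refine ⟨fun k' p => ?_, fun k' p hp => ?_, fun k' => ?_⟩ <;>
    obtain rfl | hk := eq_or_ne k' k
  · rw [shiftFlow_self_apply]
    have := hf0 k' p
    split_ifs <;> subst_vars <;> linarith
  · exact shiftFlow_of_ne hk ▸ hf0 k' p
  · rw [shiftFlow_self_apply] at hp
    by_cases hqp : q = p
    · exact hqp ▸ hq
    refine hfs k' p fun h₀ => ?_
    simp only [h₀, hqp, ↓reduceIte, add_zero, zero_sub, ne_eq, neg_eq_zero, ite_eq_right_iff,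
      Classical.not_imp] at hp
    obtain ⟨rfl, hε₀⟩ := hp
    exact hε₀ (le_antisymm (h₀ ▸ hεr) hε)
  · exact hfs k' p (by rwa [shiftFlow_of_ne hk] at hp)
  · rw [sum_shiftFlow_self (fun _ => rfl) (fun _ _ _ => rfl), hfd]
    ring
  · exact shiftFlow_of_ne hk ▸ hfd k'

theorem edgeFlow_shiftFlow [Fintype K] [DecidableEq E] (e : E) :
    G.edgeFlow (shiftFlow f k r q ε) e =
      G.edgeFlow f e + ε * ((if e ∈ q then 1 else 0) - (if e ∈ r then 1 else 0)) := by
  have hflowK : ∀ k', G.edgeFlowK (shiftFlow f k r q ε) k' e = G.edgeFlowK f k' e +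
      if k' = k then ε * ((if e ∈ q then 1 else 0) - (if e ∈ r then 1 else 0)) else 0 := by
    intro k'
    obtain rfl | hk := eq_or_ne k' k
    · rw [edgeFlowK, sum_shiftFlow_self (by simp) (fun _ _ _ => by split_ifs <;> simp)]
      simp only [edgeFlowK, if_true]
      split_ifs <;> ring
    · simp [edgeFlowK, shiftFlow_of_ne hk, hk]
  simp only [edgeFlow, hflowK, Finset.sum_add_distrib, Finset.sum_ite_eq', Finset.mem_univ,
    if_true]

end Flows

theorem sum_map_marginalCost_le [Fintype E] [Fintype K] [DecidableEq E]
    {f : K → (List E →₀ ℝ)} (hdiff : ∀ e, DifferentiableAt ℝ (G.latency e) (G.edgeFlow f e))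
    (hf : G.Feasible f) (hopt : ∀ g, G.Feasible g → G.socialCost f ≤ G.socialCost g)
    {k : K} {r q : List E} (hr : 0 < f k r) (hq : G.IsPathOf k q) :
    (r.map (G.marginalCost f)).sum ≤ (q.map (G.marginalCost f)).sum := by
  classical
  set c : E → ℝ := fun e => (if e ∈ q then 1 else 0) - (if e ∈ r then 1 else 0)
  have hderiv : HasDerivAt (fun ε => G.socialCost (shiftFlow f k r q ε))
      (∑ e, c e * G.marginalCost f e) 0 := by
    simp only [socialCost, edgeFlow_shiftFlow]
    exact HasDerivAt.fun_sum fun e _ => hasDerivAt_mul_comp_add_mul (hdiff e) (c e)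
  have hmin : ∀ ε ∈ Set.Ioo 0 (f k r),
      G.socialCost (shiftFlow f k r q 0) ≤ G.socialCost (shiftFlow f k r q ε) := by
    intro ε hε
    rw [shiftFlow_zero]
    exact hopt _ (G.feasible_shiftFlow hf hq hε.1.le hε.2.le)
  have hsplit : ∑ e, c e * G.marginalCost f e =
      (q.map (G.marginalCost f)).sum - (r.map (G.marginalCost f)).sum := by
    simp only [c, sub_mul, ite_mul, one_mul, zero_mul, Finset.sum_sub_distrib,
      Finset.sum_ite_mem_eq_sum_map (G.nodup_of_nodup_walkVerts hq.2),
      Finset.sum_ite_mem_eq_sum_map (G.nodup_of_nodup_walkVerts (hf.2.1 k r hr.ne').2)]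
  have := hderiv.nonneg_of_forall_Ioo_le hr hmin
  rwa [hsplit, sub_nonneg] at this

end RoutingInstance

open RoutingInstance in
theorem stmt_11_general {V E K : Type*} [Fintype E] [Fintype K] [DecidableEq E]
    (G : RoutingInstance V E K) (hG : G.Standard)
    (hdiff : ∀ e x, (0:ℝ) ≤ x → DifferentiableAt ℝ (G.latency e) x)
    (γ : ℝ)
    (hmarg : ∀ e x, (0:ℝ) ≤ x →
      G.latency e x + x * deriv (G.latency e) x ≤ γ * G.latency e x)
    (f : K → (List E →₀ ℝ)) (hf : G.Feasible f)
    (hopt : ∀ g : K → (List E →₀ ℝ), G.Feasible g → G.socialCost f ≤ G.socialCost g) :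
    G.IsPNE γ f := by
  intro k p q hp hq
  set m := G.marginalCost f
  have hx : ∀ e, 0 ≤ G.edgeFlow f e := G.edgeFlow_nonneg hf.1
  have hlm : ∀ e, G.latency e (G.edgeFlow f e) ≤ m e := fun e =>
    le_add_of_nonneg_right <| mul_nonneg (hx e) <|
      deriv_nonneg_of_monotoneOn_Ici (hG.2.2 e) (hx e) (hdiff e _ (hx e))
  have hm : ∀ e, 0 ≤ m e := fun e => (hG.2.1 e _ (hx e)).trans (hlm e)
  have hused : ∀ u ∈ {r | 0 < f k r}, ∀ l, G.IsWalkFrom (G.source k) (G.sink k) l →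
      (u.map m).sum ≤ (l.map m).sum := fun u hu l hl =>
    G.le_sum_map_of_isWalkFrom hm (fun q hq hnd =>
      G.sum_map_marginalCost_le (fun e => hdiff e _ (hx e)) hf hopt hu ⟨hq, hnd⟩) hl
  have hpq : (p.map m).sum ≤ (q.map m).sum :=
    G.sum_map_le_of_forall_mem_shortest hm hused (fun u hu => (hf.2.1 k u hu.ne').1) hp.1.1
      (fun e he => G.exists_pos_mem_of_edgeFlowK_pos (hp.2 e he)) hq.1
  calc G.pathCost f p ≤ (p.map m).sum := List.sum_le_sum fun e _ => hlm e
    _ ≤ (q.map m).sum := hpq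
    _ ≤ (q.map fun e => γ * G.latency e (G.edgeFlow f e)).sum :=
      List.sum_le_sum fun e _ => hmarg e _ (hx e)
    _ = γ * G.pathCost f q := List.sum_map_mul_left ..

open RoutingInstance in
/-- If γ ≥ 1 and every latency function is differentiable with
ℓ_e(x) + x·ℓ_e′(x) ≤ γ·ℓ_e(x) for all x ≥ 0, then every socially optimal flow is a
γ-PNE. -/
theorem stmt_11 {V E K : Type*} [Fintype V] [Fintype E] [Fintype K] [DecidableEq E]
    (G : RoutingInstance V E K) (hG : G.Standard)
    (hdiff : ∀ e x, (0:ℝ) ≤ x → DifferentiableAt ℝ (G.latency e) x)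
    (hconv : ∀ e, ConvexOn ℝ (Set.Ici (0:ℝ)) (fun x => x * G.latency e x))
    (γ : ℝ) (hγ : 1 ≤ γ)
    (hmarg : ∀ e x, (0:ℝ) ≤ x →
      G.latency e x + x * deriv (G.latency e) x ≤ γ * G.latency e x)
    (f : K → (List E →₀ ℝ)) (hf : G.Feasible f)
    (hopt : ∀ g : K → (List E →₀ ℝ), G.Feasible g → G.socialCost f ≤ G.socialCost g) :
    G.IsPNE γ f :=
  stmt_11_general G hG hdiff γ hmarg f hf hopt
end
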